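/- arXiv:1904.11581 — 8 statements merged into one kernel-verified Lean document; each statement's English description precedes it below -/
import Mathlib

section
/- Let y₁, y₂ be real numbers with 0 < y₁ < y₂, and set t = arcsin((y₂ − y₁)/(y₂ + y₁)). Then ∫_{-t}^{t} 1/(1 + sin θ) dθ = 2 sinh( (1/2) · log(y₂/y₁) ). -/
open Real

/-- If `0 < y₁ < y₂` and `t = arcsin ((y₂ - y₁)/(y₂ + y₁))`, then
`∫_{-t}^{t} dθ/(1 + sin θ) = 2 sinh ((1/2) log (y₂/y₁))`. -/
theorem excursion_eq_two_sinh_half_log (y₁ y₂ : ℝ) (h0 : 0 < y₁) (h12 : y₁ < y₂) :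
    (∫ θ in (-(Real.arcsin ((y₂ - y₁) / (y₂ + y₁))))..(Real.arcsin ((y₂ - y₁) / (y₂ + y₁))),
        1 / (1 + Real.sin θ)) = 2 * Real.sinh ((1 / 2) * Real.log (y₂ / y₁)) := by
  set s : ℝ := (y₂ - y₁) / (y₂ + y₁) with hs
  have hsum : (0:ℝ) < y₂ + y₁ := by linarith
  have hs0 : 0 < s := div_pos (by linarith) hsum
  have hs1 : s < 1 := by rw [hs, div_lt_one hsum]; linarith
  set t := Real.arcsin s with htdef
  have hts : Real.sin t = s := Real.sin_arcsin (by linarith) hs1.le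
  have ht0 : 0 < t := Real.arcsin_pos.2 hs0
  have htlt : t < π / 2 := Real.arcsin_lt_pi_div_two.2 hs1
  have hcos : ∀ θ ∈ Set.uIcc (-t) t, 0 < Real.cos θ := by
    intro θ hθ
    rw [Set.uIcc_of_le (by linarith)] at hθ
    exact Real.cos_pos_of_mem_Ioo ⟨by linarith [hθ.1], by linarith [hθ.2]⟩
  have hsin : ∀ θ ∈ Set.uIcc (-t) t, -1 < Real.sin θ := by
    intro θ hθ
    have hc := hcos θ hθ
    nlinarith [Real.sin_sq_add_cos_sq θ, Real.neg_one_le_sin θ]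
  have key : ∀ θ ∈ Set.uIcc (-t) t,
      HasDerivAt (fun θ => Real.tan θ - 1 / Real.cos θ) (1 / (1 + Real.sin θ)) θ := by
    intro θ hθ
    have hc := hcos θ hθ
    have hsθ := hsin θ hθ
    have h1 : HasDerivAt Real.tan (1 / Real.cos θ ^ 2) θ := Real.hasDerivAt_tan hc.ne'
    have h2 : HasDerivAt (fun θ => (Real.cos θ)⁻¹) (-(-Real.sin θ) / Real.cos θ ^ 2) θ :=
      (Real.hasDerivAt_cos θ).inv hc.ne'
    have h3 : HasDerivAt (fun θ => Real.tan θ - (Real.cos θ)⁻¹)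
        (1 / Real.cos θ ^ 2 - -(-Real.sin θ) / Real.cos θ ^ 2) θ := h1.sub h2
    have hpyth : Real.cos θ ^ 2 = (1 - Real.sin θ) * (1 + Real.sin θ) := by
      nlinarith [Real.sin_sq_add_cos_sq θ]
    have heq : (1 : ℝ) / Real.cos θ ^ 2 - -(-Real.sin θ) / Real.cos θ ^ 2
        = 1 / (1 + Real.sin θ) := by
      rw [hpyth]
      have hs1' : Real.sin θ < 1 := by nlinarith [Real.sin_sq_add_cos_sq θ, Real.sin_le_one θ]
      have h1s : (1:ℝ) - Real.sin θ ≠ 0 := by linarith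
      have h2s : (1:ℝ) + Real.sin θ ≠ 0 := by linarith
      field_simp
    rw [heq] at h3
    simpa [one_div] using h3
  have hcont : IntervalIntegrable (fun θ => 1 / (1 + Real.sin θ)) MeasureTheory.volume (-t) t := by
    apply ContinuousOn.intervalIntegrable
    apply ContinuousOn.div continuousOn_const
    · exact (continuous_const.add Real.continuous_sin).continuousOn
    · intro θ hθ
      have := hsin θ hθ
      exact ne_of_gt (by linarith)
  have hint := intervalIntegral.integral_eq_sub_of_hasDerivAt key hcont
  rw [hint]
  have htan : Real.tan t = s / Real.sqrt (1 - s ^ 2) := Real.tan_arcsin s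
  have hval : Real.tan t - 1 / Real.cos t - (Real.tan (-t) - 1 / Real.cos (-t))
      = 2 * Real.tan t := by
    rw [Real.tan_neg, Real.cos_neg]; ring
  rw [hval, htan]
  -- now pure algebra with square roots
  set a := Real.sqrt y₁ with ha
  set b := Real.sqrt y₂ with hb
  have ha0 : 0 < a := Real.sqrt_pos.2 h0
  have hb0 : 0 < b := Real.sqrt_pos.2 (by linarith)
  have ha2 : a ^ 2 = y₁ := Real.sq_sqrt h0.le
  have hb2 : b ^ 2 = y₂ := Real.sq_sqrt (by linarith)
  have hsab : s = (b ^ 2 - a ^ 2) / (b ^ 2 + a ^ 2) := by rw [ha2, hb2, hs]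
  have hsqrt : Real.sqrt (1 - s ^ 2) = 2 * a * b / (b ^ 2 + a ^ 2) := by
    have h1 : 1 - s ^ 2 = (2 * a * b / (b ^ 2 + a ^ 2)) ^ 2 := by
      rw [hsab]; field_simp; ring
    have hnn : (0:ℝ) ≤ 2 * a * b / (b ^ 2 + a ^ 2) :=
      le_of_lt (div_pos (by nlinarith) (by nlinarith))
    rw [h1, Real.sqrt_sq hnn]
  have hr : (0:ℝ) < y₂ / y₁ := div_pos (by linarith) h0
  have he1 : Real.exp ((1 / 2) * Real.log (y₂ / y₁)) = b / a := by
    rw [mul_comm, ← Real.rpow_def_of_pos hr, ← Real.sqrt_eq_rpow,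
      Real.sqrt_div (le_of_lt (by linarith : (0:ℝ) < y₂)) y₁]
  have he2 : Real.exp (-((1 / 2) * Real.log (y₂ / y₁))) = a / b := by
    rw [Real.exp_neg, he1, inv_div]
  have hlog : Real.sinh ((1 / 2) * Real.log (y₂ / y₁)) = (b / a - a / b) / 2 := by
    rw [Real.sinh_eq, he1, he2]
  rw [hlog, hsqrt, hsab]
  field_simp
end

section
/- For every real k > 1 and every δ > 0 there exists a constant c > 0, depending only on k and δ, such that for all real numbers y₁, y₂ with 1 ≤ y₁ < y₂ satisfying log(y₂/y₁) ≤ 2·log(1 + √(2δ/y₁)), one has (2 sinh((1/2)·log(y₂/y₁)))^k ≤ c · ∫_{y₁}^{y₂} y^{−(k+1)/2} dy. -/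
open Real

/-!
With `t = y₂ / y₁` the excursion is `2 sinh (½ log t) = (t - 1) / √t ≤ t - 1`, and disjointness from
the parallel geodesic reads `t ≤ (1 + √(2δ / y₁))²`. Hence `t ≤ T := (1 + √(2δ))²` and
`t - 1 ≤ C / √y₁` with `C = 2√(2δ) + 2δ`, so that
`(t - 1)^k ≤ C^(k-1) y₁^((1-k)/2) (t - 1) = C^(k-1) (y₂ - y₁) y₁^(-(k+1)/2)`, while on
`[y₁, y₂] ⊆ [y₁, T y₁]` the integrand is at least `T^(-(k+1)/2) y₁^(-(k+1)/2)`.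
-/

lemma two_mul_sinh_half_mul_log {t : ℝ} (ht : 0 < t) :
    2 * sinh (1 / 2 * log t) = (t - 1) / √t := by
  have hexp : exp (1 / 2 * log t) = √t := by
    rw [sqrt_eq_rpow, rpow_def_of_pos ht, mul_comm]
  have hsqrt : 0 < √t := sqrt_pos.mpr ht
  rw [sinh_eq, exp_neg, hexp]
  field_simp
  rw [sq_sqrt ht.le]

lemma two_mul_sinh_half_mul_log_le {t : ℝ} (ht : 1 ≤ t) :
    2 * sinh (1 / 2 * log t) ≤ t - 1 := by
  rw [two_mul_sinh_half_mul_log (by linarith)]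
  exact div_le_self (by linarith) (one_le_sqrt.mpr ht)

lemma sub_mul_rpow_le_integral_rpow {a b r : ℝ} (ha : 0 < a) (hab : a ≤ b) (hr : r ≤ 0) :
    (b - a) * b ^ r ≤ ∫ y in a..b, y ^ r := by
  have hcont : ContinuousOn (fun y : ℝ => y ^ r) (Set.uIcc a b) := by
    refine continuousOn_id.rpow_const fun y hy => Or.inl ?_
    rw [Set.uIcc_of_le hab] at hy
    exact (ha.trans_le hy.1).ne'
  calc (b - a) * b ^ r = ∫ _ in a..b, b ^ r := by simp
    _ ≤ ∫ y in a..b, y ^ r :=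
      intervalIntegral.integral_mono_on hab intervalIntegrable_const hcont.intervalIntegrable
        fun y hy => rpow_le_rpow_of_nonpos (ha.trans_le hy.1) hy.2 hr

lemma rpow_le_rpow_neg_mul_rpow {a b T r : ℝ} (ha : 0 < a) (hT : 0 < T) (hab : a ≤ b)
    (hb : b ≤ T * a) (hr : r ≤ 0) : a ^ r ≤ T ^ (-r) * b ^ r := by
  calc a ^ r = T ^ (-r) * (T * a) ^ r := by
        rw [mul_rpow hT.le ha.le, ← mul_assoc, ← rpow_add hT, neg_add_cancel, rpow_zero, one_mul]
    _ ≤ T ^ (-r) * b ^ r :=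
        mul_le_mul_of_nonneg_left (rpow_le_rpow_of_nonpos (ha.trans_le hab) hb hr) (by positivity)

lemma div_sqrt_rpow_sub_one {C y k : ℝ} (hC : 0 ≤ C) (hy : 0 < y) :
    (C / √y) ^ (k - 1) = C ^ (k - 1) * (y * y ^ (-(k + 1) / 2)) := by
  rw [div_rpow hC (sqrt_nonneg _), sqrt_eq_rpow, ← rpow_mul hy.le, div_eq_mul_inv,
    ← rpow_neg hy.le, mul_comm y, ← rpow_add_one hy.ne']
  ring_nf

lemma one_add_sqrt_div_sq_le {a y : ℝ} (ha : 0 ≤ a) (hy : 1 ≤ y) :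
    (1 + √(a / y)) ^ 2 ≤ (1 + √a) ^ 2 := by
  gcongr
  exact div_le_self ha hy

lemma one_add_sqrt_div_sq_sub_one_le {a y : ℝ} (ha : 0 ≤ a) (hy : 1 ≤ y) :
    (1 + √(a / y)) ^ 2 - 1 ≤ (2 * √a + a) / √y := by
  have hy₀ : 0 < √y := sqrt_pos.mpr (by linarith)
  have hsq : √(a / y) ^ 2 ≤ a / √y := by
    rw [sq_sqrt (by positivity)]
    exact div_le_div_of_nonneg_left ha hy₀ (sqrt_le_self_iff.mpr (Or.inr hy))
  calc (1 + √(a / y)) ^ 2 - 1 = 2 * (√a / √y) + √(a / y) ^ 2 := by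
        rw [sqrt_div' a (by linarith : (0 : ℝ) ≤ y)]; ring
    _ ≤ (2 * √a + a) / √y := by rw [add_div, mul_div_assoc]; gcongr

lemma div_sub_one_rpow_le_mul_integral {C T k y₁ y₂ : ℝ} (hC : 0 ≤ C) (hT : 0 < T) (hk : 1 ≤ k)
    (hy₁ : 0 < y₁) (hy : y₁ ≤ y₂) (hexcursion : y₂ / y₁ - 1 ≤ C / √y₁) (hy₂ : y₂ ≤ T * y₁) :
    (y₂ / y₁ - 1) ^ k ≤ C ^ (k - 1) * T ^ ((k + 1) / 2) * ∫ y in y₁..y₂, y ^ (-(k + 1) / 2) := by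
  have ht : 0 ≤ y₂ / y₁ - 1 := sub_nonneg.mpr ((one_le_div hy₁).mpr hy)
  have hsub : y₂ - y₁ = (y₂ / y₁ - 1) * y₁ := by rw [sub_one_mul, div_mul_cancel₀ y₂ hy₁.ne']
  have hr : -(k + 1) / 2 ≤ 0 := by linarith
  have hrpow := rpow_le_rpow_neg_mul_rpow hy₁ hT hy hy₂ hr
  rw [show -(-(k + 1) / 2) = (k + 1) / 2 by ring] at hrpow
  calc (y₂ / y₁ - 1) ^ k = (y₂ / y₁ - 1) ^ (k - 1) * (y₂ / y₁ - 1) := by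
        rw [← rpow_add_one' ht (by linarith), sub_add_cancel]
    _ ≤ (C / √y₁) ^ (k - 1) * (y₂ / y₁ - 1) := by gcongr
    _ = C ^ (k - 1) * ((y₂ - y₁) * y₁ ^ (-(k + 1) / 2)) := by
        rw [div_sqrt_rpow_sub_one hC hy₁, hsub]; ring
    _ ≤ C ^ (k - 1) * ((y₂ - y₁) * (T ^ ((k + 1) / 2) * y₂ ^ (-(k + 1) / 2))) := by
        gcongr
    _ ≤ C ^ (k - 1) * T ^ ((k + 1) / 2) * ∫ y in y₁..y₂, y ^ (-(k + 1) / 2) := by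
        rw [mul_left_comm (y₂ - y₁), ← mul_assoc]
        gcongr
        exact sub_mul_rpow_le_integral_rpow hy₁ hy hr

/-- For every `k > 1` and `δ > 0` there is `c > 0` such that for all `1 ≤ y₁ < y₂` with
`log (y₂/y₁) ≤ 2 log (1 + √(2δ/y₁))`, one has
`(2 sinh ((1/2) log (y₂/y₁)))^k ≤ c ∫_{y₁}^{y₂} y^{-(k+1)/2} dy`. -/
theorem excursion_pow_le_integral (k δ : ℝ) (hk : 1 < k) (hδ : 0 < δ) :
    ∃ c : ℝ, 0 < c ∧ ∀ y₁ y₂ : ℝ, 1 ≤ y₁ → y₁ < y₂ →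
      Real.log (y₂ / y₁) ≤ 2 * Real.log (1 + Real.sqrt (2 * δ / y₁)) →
      (2 * Real.sinh ((1 / 2) * Real.log (y₂ / y₁))) ^ k ≤
        c * ∫ y in y₁..y₂, y ^ (-(k + 1) / 2) := by
  refine ⟨(2 * √(2 * δ) + 2 * δ) ^ (k - 1) * ((1 + √(2 * δ)) ^ 2) ^ ((k + 1) / 2), by positivity,
    fun y₁ y₂ hy₁ hy hlog => ?_⟩
  have hy₁₀ : 0 < y₁ := by linarith
  have ht₁ : 1 < y₂ / y₁ := (one_lt_div hy₁₀).mpr hy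
  have ht : y₂ / y₁ ≤ (1 + √(2 * δ / y₁)) ^ 2 := by
    rwa [← log_le_log_iff (by linarith) (by positivity), log_pow, Nat.cast_ofNat]
  have hexcursion : y₂ / y₁ - 1 ≤ (2 * √(2 * δ) + 2 * δ) / √y₁ :=
    (sub_le_sub_right ht 1).trans (one_add_sqrt_div_sq_sub_one_le (by positivity) hy₁)
  have hy₂ : y₂ ≤ (1 + √(2 * δ)) ^ 2 * y₁ :=
    (div_le_iff₀ hy₁₀).mp (ht.trans (one_add_sqrt_div_sq_le (by positivity) hy₁))
  have hE : 0 ≤ 2 * sinh (1 / 2 * log (y₂ / y₁)) :=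
    mul_nonneg zero_le_two (sinh_nonneg_iff.mpr (mul_nonneg (by norm_num) (log_nonneg ht₁.le)))
  calc (2 * sinh (1 / 2 * log (y₂ / y₁))) ^ k ≤ (y₂ / y₁ - 1) ^ k :=
        rpow_le_rpow hE (two_mul_sinh_half_mul_log_le ht₁.le) (by linarith)
    _ ≤ _ := div_sub_one_rpow_le_mul_integral (by positivity) (by positivity) hk.le hy₁₀ hy.le
        hexcursion hy₂
end

section
/- For every real k > 1 and every δ > 0 there exists a constant c > 0, depending only on k and δ, with the following property. Let (y₁⁽ⁱ⁾, y₂⁽ⁱ⁾)_{i ∈ ℕ} be a sequence of pairs of real numbers with 1 ≤ y₁⁽ⁱ⁾ < y₂⁽ⁱ⁾ for all i, such that the open intervals (y₁⁽ⁱ⁾, y₂⁽ⁱ⁾) are pairwise disjoint and each pair satisfies log(y₂⁽ⁱ⁾/y₁⁽ⁱ⁾) ≤ 2·log(1 + √(2δ/y₁⁽ⁱ⁾)). Then ∑_{i=0}^{∞} ( 2 sinh((1/2)·log(y₂⁽ⁱ⁾/y₁⁽ⁱ⁾)) )^k ≤ c. -/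
open Real

lemma sum_Ioo_length_le (t : Finset ℕ) (a b : ℕ → ℝ) (A B : ℝ) (hAB : A ≤ B)
    (hab : ∀ i ∈ t, a i ≤ b i)
    (hsub : ∀ i ∈ t, Set.Ioo (a i) (b i) ⊆ Set.Ioo A B)
    (hd : (t : Set ℕ).PairwiseDisjoint (fun i => Set.Ioo (a i) (b i))) :
    ∑ i ∈ t, (b i - a i) ≤ B - A := by
  have h1 : ∑ i ∈ t, ENNReal.ofReal (b i - a i) ≤ ENNReal.ofReal (B - A) := by
    calc ∑ i ∈ t, ENNReal.ofReal (b i - a i)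
        = ∑ i ∈ t, MeasureTheory.volume (Set.Ioo (a i) (b i)) := by
          refine Finset.sum_congr rfl fun i hi => ?_
          rw [Real.volume_Ioo]
      _ = MeasureTheory.volume (⋃ i ∈ t, Set.Ioo (a i) (b i)) :=
          (MeasureTheory.measure_biUnion_finset hd fun i _ => measurableSet_Ioo).symm
      _ ≤ MeasureTheory.volume (Set.Ioo A B) :=
          MeasureTheory.measure_mono (Set.iUnion₂_subset hsub)
      _ = ENNReal.ofReal (B - A) := Real.volume_Ioo
  rw [← ENNReal.ofReal_sum_of_nonneg (fun i hi => sub_nonneg.2 (hab i hi))] at h1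
  exact (ENNReal.ofReal_le_ofReal_iff (by linarith)).1 h1

lemma sqrt_two_pow (n : ℕ) : Real.sqrt ((2:ℝ) ^ n) = (Real.sqrt 2) ^ n := by
  induction n with
  | zero => simp
  | succ m ih => rw [pow_succ, pow_succ, Real.sqrt_mul (by positivity), ih]

/-- Sum of `k`-th powers of excursions in pairwise disjoint horoballs, all missing a fixed
parallel geodesic at distance `δ`, is bounded by a constant depending only on `k` and `δ`. -/
theorem tsum_excursion_pow_le (k δ : ℝ) (hk : 1 < k) (hδ : 0 < δ) :
    ∃ c : ℝ, 0 < c ∧ ∀ y₁ y₂ : ℕ → ℝ,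
      (∀ i, 1 ≤ y₁ i) → (∀ i, y₁ i < y₂ i) →
      (Pairwise fun i j => Disjoint (Set.Ioo (y₁ i) (y₂ i)) (Set.Ioo (y₁ j) (y₂ j))) →
      (∀ i, Real.log (y₂ i / y₁ i) ≤ 2 * Real.log (1 + Real.sqrt (2 * δ / y₁ i))) →
      ∑' i : ℕ, (2 * Real.sinh ((1 / 2) * Real.log (y₂ i / y₁ i))) ^ k ≤ c := by
  set A : ℝ := Real.sqrt (2 * δ) with hAdef
  have hA0 : 0 < A := Real.sqrt_pos.2 (by linarith)
  set q : ℝ := (Real.sqrt 2)⁻¹ with hqdef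
  have hs2 : (1:ℝ) < Real.sqrt 2 := by
    rw [show (1:ℝ) = Real.sqrt 1 by simp]
    exact Real.sqrt_lt_sqrt (by norm_num) (by norm_num)
  have hq0 : 0 < q := by positivity
  have hq1 : q < 1 := inv_lt_one_of_one_lt₀ hs2
  set r : ℝ := q ^ (k - 1) with hrdef
  have hr0 : 0 < r := Real.rpow_pos_of_pos hq0 _
  have hr1 : r < 1 := Real.rpow_lt_one hq0.le hq1 (by linarith)
  set K : ℝ := 2 * (1 + A) ^ 2 - 1 with hKdef
  have hK : 0 < K := by nlinarith
  set C : ℝ := (2 * A) ^ (k - 1) * K with hCdef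
  have hC0 : 0 < (2 * A) ^ (k - 1) := Real.rpow_pos_of_pos (by linarith) _
  have hC : 0 < C := mul_pos hC0 hK
  have h1r : 0 < 1 - r := by linarith
  refine ⟨C * (1 - r)⁻¹, mul_pos hC (inv_pos.2 h1r), ?_⟩
  intro y₁ y₂ hy1 hy12 hdisj hlog
  have hy1p : ∀ i, (0:ℝ) < y₁ i := fun i => lt_of_lt_of_le one_pos (hy1 i)
  have hup : ∀ i, (0:ℝ) < y₂ i / y₁ i := fun i =>
    div_pos ((hy1p i).trans (hy12 i)) (hy1p i)
  have hu1 : ∀ i, (1:ℝ) < y₂ i / y₁ i := fun i => (one_lt_div (hy1p i)).2 (hy12 i)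
  -- the excursion and its algebraic form
  have he_eq : ∀ i, 2 * Real.sinh ((1 / 2) * Real.log (y₂ i / y₁ i))
      = Real.sqrt (y₂ i / y₁ i) - (Real.sqrt (y₂ i / y₁ i))⁻¹ := fun i => by
    rw [Real.sinh_eq, Real.sqrt_eq_rpow, Real.rpow_def_of_pos (hup i), Real.exp_neg,
      mul_comm (Real.log (y₂ i / y₁ i)) (1 / (2:ℝ))]
    ring_nf
  have he_pos : ∀ i, 0 < 2 * Real.sinh ((1 / 2) * Real.log (y₂ i / y₁ i)) := fun i => by
    have hl := Real.log_pos (hu1 i)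
    have : 0 < Real.sinh ((1 / 2) * Real.log (y₂ i / y₁ i)) := Real.sinh_pos_iff.2 (by linarith)
    linarith
  have hsq1 : ∀ i, 1 ≤ Real.sqrt (y₂ i / y₁ i) := fun i => by
    rw [show (1:ℝ) = Real.sqrt 1 by simp]
    exact Real.sqrt_le_sqrt (hu1 i).le
  have ht_le : ∀ i, Real.sqrt (y₂ i / y₁ i) ≤ 1 + Real.sqrt (2 * δ / y₁ i) := fun i => by
    have hw0 : (0:ℝ) ≤ Real.sqrt (2 * δ / y₁ i) := Real.sqrt_nonneg _
    have h1w : (0:ℝ) < 1 + Real.sqrt (2 * δ / y₁ i) := by linarith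
    have hll : Real.log (Real.sqrt (y₂ i / y₁ i)) ≤ Real.log (1 + Real.sqrt (2 * δ / y₁ i)) := by
      rw [Real.log_sqrt (hup i).le]
      linarith [hlog i]
    exact (Real.log_le_log_iff (Real.sqrt_pos.2 (hup i)) h1w).1 hll
  -- buckets
  set n : ℕ → ℕ := fun i => ⌊Real.logb 2 (y₁ i)⌋₊ with hndef
  have hpow_le : ∀ i, (2:ℝ) ^ (n i) ≤ y₁ i := fun i => by
    have h0 : (0:ℝ) ≤ Real.logb 2 (y₁ i) := Real.logb_nonneg one_lt_two (hy1 i)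
    calc (2:ℝ) ^ (n i) = (2:ℝ) ^ ((n i : ℝ)) := (Real.rpow_natCast 2 (n i)).symm
      _ ≤ (2:ℝ) ^ (Real.logb 2 (y₁ i)) :=
          Real.rpow_le_rpow_of_exponent_le one_le_two (Nat.floor_le h0)
      _ = y₁ i := Real.rpow_logb (by norm_num) (by norm_num) (hy1p i)
  have hlt_pow : ∀ i, y₁ i < (2:ℝ) ^ (n i + 1) := fun i => by
    calc y₁ i = (2:ℝ) ^ (Real.logb 2 (y₁ i)) :=
          (Real.rpow_logb (by norm_num) (by norm_num) (hy1p i)).symm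
      _ < (2:ℝ) ^ (((n i : ℝ)) + 1) :=
          Real.rpow_lt_rpow_of_exponent_lt one_lt_two (Nat.lt_floor_add_one _)
      _ = (2:ℝ) ^ (n i + 1) := by
          rw [show ((n i : ℝ) + 1) = ((n i + 1 : ℕ) : ℝ) by push_cast; ring,
            Real.rpow_natCast]
  -- bound (1): excursion ≤ 2 A q^n
  have hb1 : ∀ i, 2 * Real.sinh ((1 / 2) * Real.log (y₂ i / y₁ i)) ≤ 2 * (A * q ^ (n i)) :=
    fun i => by
    have h1t : 1 ≤ Real.sqrt (y₂ i / y₁ i) := hsq1 i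
    have htp : 0 < Real.sqrt (y₂ i / y₁ i) := lt_of_lt_of_le one_pos h1t
    have hw_le : Real.sqrt (2 * δ / y₁ i) ≤ A * q ^ (n i) := by
      have h2n : (Real.sqrt 2) ^ (n i) ≤ Real.sqrt (y₁ i) := by
        rw [← sqrt_two_pow]; exact Real.sqrt_le_sqrt (hpow_le i)
      have hp2 : (0:ℝ) < (Real.sqrt 2) ^ (n i) := by positivity
      calc Real.sqrt (2 * δ / y₁ i) = A / Real.sqrt (y₁ i) := by
            rw [hAdef, Real.sqrt_div (by linarith) (y₁ i)]
        _ ≤ A / (Real.sqrt 2) ^ (n i) := div_le_div_of_nonneg_left hA0.le hp2 h2n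
        _ = A * q ^ (n i) := by rw [hqdef, inv_pow, div_eq_mul_inv]
    have h2 : Real.sqrt (y₂ i / y₁ i) - (Real.sqrt (y₂ i / y₁ i))⁻¹
        ≤ 2 * (Real.sqrt (y₂ i / y₁ i) - 1) := by
      nlinarith [sq_nonneg (Real.sqrt (y₂ i / y₁ i) - 1),
        inv_mul_cancel₀ htp.ne', inv_pos.2 htp]
    rw [he_eq i]
    have := ht_le i
    linarith
  -- bound (2): excursion ≤ (y₂ - y₁) / 2^n
  have hb2 : ∀ i, 2 * Real.sinh ((1 / 2) * Real.log (y₂ i / y₁ i))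
      ≤ (y₂ i - y₁ i) * ((2:ℝ) ^ (n i))⁻¹ := fun i => by
    have h1t : 1 ≤ Real.sqrt (y₂ i / y₁ i) := hsq1 i
    have htp : 0 < Real.sqrt (y₂ i / y₁ i) := lt_of_lt_of_le one_pos h1t
    have ht2 : Real.sqrt (y₂ i / y₁ i) ^ 2 = y₂ i / y₁ i := Real.sq_sqrt (hup i).le
    have key : Real.sqrt (y₂ i / y₁ i) - (Real.sqrt (y₂ i / y₁ i))⁻¹
        ≤ y₂ i / y₁ i - 1 := by
      nlinarith [ht2, sq_nonneg (Real.sqrt (y₂ i / y₁ i) - 1), inv_mul_cancel₀ htp.ne',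
        inv_pos.2 htp, mul_nonneg (sq_nonneg (Real.sqrt (y₂ i / y₁ i) - 1)) htp.le]
    have hstep : y₂ i / y₁ i - 1 = (y₂ i - y₁ i) / y₁ i := by
      rw [sub_div, div_self (hy1p i).ne']
    have hdd : (y₂ i - y₁ i) / y₁ i ≤ (y₂ i - y₁ i) / (2:ℝ) ^ (n i) :=
      div_le_div_of_nonneg_left (by linarith [hy12 i]) (by positivity) (hpow_le i)
    rw [he_eq i]
    calc Real.sqrt (y₂ i / y₁ i) - (Real.sqrt (y₂ i / y₁ i))⁻¹
        ≤ (y₂ i - y₁ i) / y₁ i := by rw [← hstep]; exact key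
      _ ≤ (y₂ i - y₁ i) / (2:ℝ) ^ (n i) := hdd
      _ = (y₂ i - y₁ i) * ((2:ℝ) ^ (n i))⁻¹ := div_eq_mul_inv _ _
  -- upper end of intervals
  have hy2_le : ∀ i, y₂ i ≤ (1 + A) ^ 2 * y₁ i := fun i => by
    have hw0 : (0:ℝ) ≤ Real.sqrt (2 * δ / y₁ i) := Real.sqrt_nonneg _
    have hwA : Real.sqrt (2 * δ / y₁ i) ≤ A := by
      rw [hAdef]
      exact Real.sqrt_le_sqrt (div_le_self (by linarith) (hy1 i))
    have h1w : (0:ℝ) < 1 + Real.sqrt (2 * δ / y₁ i) := by linarith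
    have h2 : Real.log (y₂ i / y₁ i) ≤ Real.log ((1 + Real.sqrt (2 * δ / y₁ i)) ^ 2) := by
      rw [Real.log_pow]
      push_cast
      linarith [hlog i]
    have h3 : y₂ i / y₁ i ≤ (1 + Real.sqrt (2 * δ / y₁ i)) ^ 2 :=
      (Real.log_le_log_iff (hup i) (by positivity)).1 h2
    have h4 : (1 + Real.sqrt (2 * δ / y₁ i)) ^ 2 ≤ (1 + A) ^ 2 := by nlinarith
    rw [div_le_iff₀ (hy1p i)] at h3
    calc y₂ i ≤ (1 + Real.sqrt (2 * δ / y₁ i)) ^ 2 * y₁ i := h3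
      _ ≤ (1 + A) ^ 2 * y₁ i := mul_le_mul_of_nonneg_right h4 (hy1p i).le
  -- nonnegativity of terms
  have hf0 : ∀ i, 0 ≤ (2 * Real.sinh ((1 / 2) * Real.log (y₂ i / y₁ i))) ^ k :=
    fun i => Real.rpow_nonneg (he_pos i).le k
  -- pointwise bound on the k-th power
  have step1 : ∀ i, (2 * Real.sinh ((1 / 2) * Real.log (y₂ i / y₁ i))) ^ k
      ≤ (2 * A) ^ (k - 1) * r ^ (n i) * ((2:ℝ) ^ (n i))⁻¹ * (y₂ i - y₁ i) := fun i => by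
    have hek : (2 * Real.sinh ((1 / 2) * Real.log (y₂ i / y₁ i))) ^ k
        = (2 * Real.sinh ((1 / 2) * Real.log (y₂ i / y₁ i))) ^ (k - 1)
          * (2 * Real.sinh ((1 / 2) * Real.log (y₂ i / y₁ i))) := by
      conv_lhs => rw [show k = (k - 1) + 1 by ring]
      rw [Real.rpow_add (he_pos i), Real.rpow_one]
    have h1 : (2 * Real.sinh ((1 / 2) * Real.log (y₂ i / y₁ i))) ^ (k - 1)
        ≤ (2 * A * q ^ (n i)) ^ (k - 1) := by
      apply Real.rpow_le_rpow (he_pos i).le _ (by linarith)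
      calc 2 * Real.sinh ((1 / 2) * Real.log (y₂ i / y₁ i)) ≤ 2 * (A * q ^ (n i)) := hb1 i
        _ = 2 * A * q ^ (n i) := by ring
    have h2 : (2 * A * q ^ (n i)) ^ (k - 1) = (2 * A) ^ (k - 1) * r ^ (n i) := by
      rw [Real.mul_rpow (by positivity) (by positivity)]
      congr 1
      rw [← Real.rpow_natCast q (n i), ← Real.rpow_mul hq0.le,
        mul_comm ((n i : ℝ)) (k - 1), Real.rpow_mul hq0.le, Real.rpow_natCast]
    have h3 := mul_le_mul (le_of_le_of_eq h1 h2) (hb2 i) (he_pos i).le (by positivity)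
    rw [hek]
    calc (2 * Real.sinh ((1 / 2) * Real.log (y₂ i / y₁ i))) ^ (k - 1)
          * (2 * Real.sinh ((1 / 2) * Real.log (y₂ i / y₁ i)))
        ≤ (2 * A) ^ (k - 1) * r ^ (n i) * ((y₂ i - y₁ i) * ((2:ℝ) ^ (n i))⁻¹) := h3
      _ = (2 * A) ^ (k - 1) * r ^ (n i) * ((2:ℝ) ^ (n i))⁻¹ * (y₂ i - y₁ i) := by ring
  -- finite sums are bounded
  have key : ∀ s : Finset ℕ,
      ∑ i ∈ s, (2 * Real.sinh ((1 / 2) * Real.log (y₂ i / y₁ i))) ^ k ≤ C * (1 - r)⁻¹ := by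
    intro s
    set N := s.sup n + 1 with hNdef
    have hmap : ∀ i ∈ s, n i ∈ Finset.range N :=
      fun i hi => Finset.mem_range.2 (Nat.lt_succ_of_le (Finset.le_sup hi))
    have bucket : ∀ m, ∑ i ∈ s.filter (fun i => n i = m),
        (2 * A) ^ (k - 1) * r ^ (n i) * ((2:ℝ) ^ (n i))⁻¹ * (y₂ i - y₁ i) ≤ C * r ^ m := by
      intro m
      have hlen : ∑ i ∈ s.filter (fun i => n i = m), (y₂ i - y₁ i)
          ≤ 2 * (2:ℝ) ^ m * (1 + A) ^ 2 - (2:ℝ) ^ m := by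
        apply sum_Ioo_length_le (t := s.filter (fun i => n i = m)) (a := y₁) (b := y₂)
        · nlinarith [pow_pos (show (0:ℝ) < 2 by norm_num) m, hA0]
        · exact fun i _ => (hy12 i).le
        · intro i hi
          have hm : n i = m := (Finset.mem_filter.1 hi).2
          intro x hx
          constructor
          · calc (2:ℝ) ^ m = (2:ℝ) ^ (n i) := by rw [hm]
              _ ≤ y₁ i := hpow_le i
              _ < x := hx.1
          · calc x < y₂ i := hx.2
              _ ≤ (1 + A) ^ 2 * y₁ i := hy2_le i
              _ < (1 + A) ^ 2 * (2:ℝ) ^ (n i + 1) := by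
                  apply mul_lt_mul_of_pos_left (hlt_pow i) (by positivity)
              _ = 2 * (2:ℝ) ^ m * (1 + A) ^ 2 := by rw [hm]; ring
        · intro i hi j hj hij
          exact hdisj hij
      have heq : ∑ i ∈ s.filter (fun i => n i = m),
          (2 * A) ^ (k - 1) * r ^ (n i) * ((2:ℝ) ^ (n i))⁻¹ * (y₂ i - y₁ i)
          = (2 * A) ^ (k - 1) * r ^ m * ((2:ℝ) ^ m)⁻¹
            * ∑ i ∈ s.filter (fun i => n i = m), (y₂ i - y₁ i) := by
        rw [Finset.mul_sum]
        refine Finset.sum_congr rfl fun i hi => ?_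
        rw [(Finset.mem_filter.1 hi).2]
      rw [heq]
      have hpos : (0:ℝ) < (2 * A) ^ (k - 1) * r ^ m * ((2:ℝ) ^ m)⁻¹ := by positivity
      calc (2 * A) ^ (k - 1) * r ^ m * ((2:ℝ) ^ m)⁻¹
            * ∑ i ∈ s.filter (fun i => n i = m), (y₂ i - y₁ i)
          ≤ (2 * A) ^ (k - 1) * r ^ m * ((2:ℝ) ^ m)⁻¹
            * (2 * (2:ℝ) ^ m * (1 + A) ^ 2 - (2:ℝ) ^ m) :=
            mul_le_mul_of_nonneg_left hlen hpos.le
        _ = C * r ^ m := by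
            rw [hCdef, hKdef]
            field_simp
    calc ∑ i ∈ s, (2 * Real.sinh ((1 / 2) * Real.log (y₂ i / y₁ i))) ^ k
        ≤ ∑ i ∈ s, (2 * A) ^ (k - 1) * r ^ (n i) * ((2:ℝ) ^ (n i))⁻¹ * (y₂ i - y₁ i) :=
          Finset.sum_le_sum fun i _ => step1 i
      _ = ∑ m ∈ Finset.range N, ∑ i ∈ s.filter (fun i => n i = m),
            (2 * A) ^ (k - 1) * r ^ (n i) * ((2:ℝ) ^ (n i))⁻¹ * (y₂ i - y₁ i) :=
          (Finset.sum_fiberwise_of_maps_to hmap _).symm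
      _ ≤ ∑ m ∈ Finset.range N, C * r ^ m := Finset.sum_le_sum fun m _ => bucket m
      _ = C * ∑ m ∈ Finset.range N, r ^ m := by rw [Finset.mul_sum]
      _ ≤ C * (1 - r)⁻¹ := by
          apply mul_le_mul_of_nonneg_left _ hC.le
          calc ∑ m ∈ Finset.range N, r ^ m
              ≤ ∑' m : ℕ, r ^ m := Summable.sum_le_tsum _ (fun m _ => by positivity)
                (summable_geometric_of_lt_one hr0.le hr1)
            _ = (1 - r)⁻¹ := tsum_geometric_of_lt_one hr0.le hr1
  have hsum : Summable fun i => (2 * Real.sinh ((1 / 2) * Real.log (y₂ i / y₁ i))) ^ k :=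
    summable_of_sum_le (fun i => hf0 i) key
  exact Summable.tsum_le_of_sum_le hsum key
end

section
/- Let 0 < c < 2 be a constant and let (d_i)_{i ∈ ℕ} be a sequence of real numbers with d₀ ≥ 0 and d_{i+1} ≥ d_i + c·e^{−d_i/2} for all i ∈ ℕ. Then for every i ∈ ℕ one has d_i ≥ 2·log(1 + i·c/2). -/
open Real

/-- Recurrence estimate: if `0 < c < 2`, `d₀ ≥ 0` and `d_{i+1} ≥ d_i + c e^{-d_i/2}`,
then `d_i ≥ 2 log (1 + i c / 2)` for all `i`. -/
theorem recurrence_log_lower_bound (c : ℝ) (hc0 : 0 < c) (hc2 : c < 2) (d : ℕ → ℝ)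
    (hd0 : 0 ≤ d 0) (hrec : ∀ i : ℕ, d i + c * Real.exp (-d i / 2) ≤ d (i + 1)) :
    ∀ i : ℕ, 2 * Real.log (1 + i * c / 2) ≤ d i := by
  intro i
  induction i with
  | zero => simpa using hd0
  | succ i ih =>
    set u : ℝ := 1 + i * c / 2 with hu_def
    have hic : (0:ℝ) ≤ i * c := by positivity
    have hu1 : (1:ℝ) ≤ u := by simp only [hu_def]; linarith
    have hu : (0:ℝ) < u := lt_of_lt_of_le one_pos hu1
    set a : ℝ := 2 * Real.log u with ha_def
    have ha0 : 0 ≤ a := by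
      have := Real.log_nonneg hu1
      simp only [ha_def]; linarith
    have hexp_a : Real.exp (-a / 2) = u⁻¹ := by
      have : -a / 2 = -Real.log u := by simp only [ha_def]; ring
      rw [this, Real.exp_neg, Real.exp_log hu]
    -- Monotonicity: a + c e^{-a/2} ≤ d i + c e^{-d i /2}
    have hda : a ≤ d i := ih
    have key1 : a + c * Real.exp (-a / 2) ≤ d i + c * Real.exp (-d i / 2) := by
      have h1 : Real.exp (-a / 2) - Real.exp (-d i / 2) ≤ (d i - a) / 2 := by
        have hsplit : Real.exp (-a/2) - Real.exp (-d i /2)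
            = Real.exp (-a/2) * (1 - Real.exp (-(d i - a)/2)) := by
          rw [mul_sub, mul_one, ← Real.exp_add]; ring_nf
        have h2 : 1 - Real.exp (-(d i - a)/2) ≤ (d i - a)/2 := by
          have := Real.add_one_le_exp (-(d i - a)/2)
          linarith
        have h3 : Real.exp (-a/2) ≤ 1 := by
          rw [Real.exp_le_one_iff]; linarith
        have h4 : 0 ≤ (d i - a)/2 := by linarith
        calc Real.exp (-a/2) - Real.exp (-d i /2)
            = Real.exp (-a/2) * (1 - Real.exp (-(d i - a)/2)) := hsplit
          _ ≤ 1 * ((d i - a)/2) := by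
              apply mul_le_mul h3 h2 _ zero_le_one
              have := Real.exp_le_one_iff.mpr (by linarith : -(d i - a)/2 ≤ 0)
              linarith [Real.exp_pos (-(d i - a)/2)]
          _ = (d i - a)/2 := one_mul _
      nlinarith [Real.exp_pos (-a/2), Real.exp_pos (-d i /2)]
    -- Step: 2 log (1 + (i+1) c / 2) ≤ a + c / u
    have key2 : 2 * Real.log (1 + (i + 1 : ℕ) * c / 2) ≤ a + c * u⁻¹ := by
      have heq : (1 + (i + 1 : ℕ) * c / 2 : ℝ) = u * (1 + c / (2 * u)) := by
        push_cast
        field_simp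
        ring
      rw [heq, Real.log_mul (ne_of_gt hu) (by positivity)]
      have hlog : Real.log (1 + c / (2 * u)) ≤ c / (2 * u) := by
        have := Real.log_le_sub_one_of_pos (show (0:ℝ) < 1 + c / (2*u) by positivity)
        linarith
      have : c * u⁻¹ = 2 * (c / (2 * u)) := by field_simp
      simp only [ha_def]
      linarith [hlog]
    calc 2 * Real.log (1 + (i + 1 : ℕ) * c / 2) ≤ a + c * u⁻¹ := key2
      _ = a + c * Real.exp (-a/2) := by rw [hexp_a]
      _ ≤ d i + c * Real.exp (-d i / 2) := key1
      _ ≤ d (i + 1) := hrec i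
end

section
/- For every real number k ≥ 1 and all real numbers x, y ≥ 0, one has (x + y)^k ≤ x^k + 2^{k−1}·k·y·(x^{k−1} + y^{k−1}). -/
open Real

/-- Bernoulli's inequality, homogenised. -/
lemma rpow_add_mul_rpow_sub_one_mul_sub_le_rpow {p a b : ℝ} (hp : 1 ≤ p) (ha : 0 < a)
    (hb : 0 ≤ b) : a ^ p + p * a ^ (p - 1) * (b - a) ≤ b ^ p := by
  have hbern : 1 + p * (b / a - 1) ≤ (b / a) ^ p := by
    simpa using one_add_mul_self_le_rpow_one_add (s := b / a - 1) (by simp; positivity) hp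
  have hscale : a ^ p = a ^ (p - 1) * a := by rw [rpow_sub_one ha.ne', div_mul_cancel₀ _ ha.ne']
  calc a ^ p + p * a ^ (p - 1) * (b - a) = a ^ p * (1 + p * (b / a - 1)) := by
        rw [hscale]; field_simp
    _ ≤ a ^ p * (b / a) ^ p := by gcongr
    _ = b ^ p := by rw [div_rpow hb ha.le, mul_div_cancel₀ _ (rpow_pos_of_pos ha p).ne']

lemma add_rpow_le_two_rpow_mul_rpow_add_rpow {p a b : ℝ} (hp : 0 ≤ p) (ha : 0 ≤ a)
    (hb : 0 ≤ b) : (a + b) ^ p ≤ 2 ^ p * (a ^ p + b ^ p) := calc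
  (a + b) ^ p ≤ (2 * max a b) ^ p := by
    rw [two_mul]; gcongr; exacts [le_max_left a b, le_max_right a b]
  _ = 2 ^ p * max a b ^ p := mul_rpow zero_le_two (le_max_of_le_left ha)
  _ = 2 ^ p * max (a ^ p) (b ^ p) := by rw [rpow_max ha hb hp]
  _ ≤ 2 ^ p * (a ^ p + b ^ p) := by
    gcongr; exact max_le_add_of_nonneg (rpow_nonneg ha p) (rpow_nonneg hb p)

lemma rpow_add_le_rpow_add_mul_mul_rpow_sub_one {p x y : ℝ} (hp : 1 ≤ p) (hx : 0 ≤ x)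
    (hy : 0 ≤ y) : (x + y) ^ p ≤ x ^ p + p * y * (x + y) ^ (p - 1) := by
  rcases hy.eq_or_lt with rfl | hy
  · simp
  have := rpow_add_mul_rpow_sub_one_mul_sub_le_rpow hp (by positivity : 0 < x + y) hx
  linarith

/-- For `k ≥ 1` and `x, y ≥ 0`: `(x + y)^k ≤ x^k + 2^{k-1} k y (x^{k-1} + y^{k-1})`. -/
theorem add_rpow_le (k x y : ℝ) (hk : 1 ≤ k) (hx : 0 ≤ x) (hy : 0 ≤ y) :
    (x + y) ^ k ≤ x ^ k + 2 ^ (k - 1) * k * y * (x ^ (k - 1) + y ^ (k - 1)) := calc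
  (x + y) ^ k ≤ x ^ k + k * y * (x + y) ^ (k - 1) :=
    rpow_add_le_rpow_add_mul_mul_rpow_sub_one hk hx hy
  _ ≤ x ^ k + k * y * (2 ^ (k - 1) * (x ^ (k - 1) + y ^ (k - 1))) := by
    have : 0 ≤ k := by linarith
    gcongr
    exact add_rpow_le_two_rpow_mul_rpow_add_rpow (by linarith) hx hy
  _ = x ^ k + 2 ^ (k - 1) * k * y * (x ^ (k - 1) + y ^ (k - 1)) := by ring
end

section
/- Let G be a countable group acting by isometries on a metric space (X, d), let x ∈ X, and let μ be a probability measure on G with finite first moment, i.e., ∫_G d(x, g·x) dμ(g) < ∞. Then there exists a constant L ≥ 0 such that for μ^{⊗ℕ}-almost every sequence (g_n)_{n ≥ 1} of independent μ-distributed elements of G, the limit lim_{n → ∞} d(x, g₁g₂⋯g_n·x)/n exists and equals L. -/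
/-!
Let `w_n = g₀ ⋯ g_{n-1}` and let `p g = d(x, g • x)`, a group seminorm since the action is
isometric. Stationarity of the i.i.d. increments makes `α n = 𝔼 p(w_n)` subadditive, so
`α n / n → L = inf α n / n` (Fekete).

Upper bound: cutting `w_n` into blocks of length `k`, subadditivity and the strong law for the
i.i.d. block lengths give `limsup p(w_n) / n ≤ α k / k` almost surely.

Lower bound: dropping the first `k` steps changes `p(w_n)` by at most `p(w_k)`, so
`liminf p(w_n) / n` is a tail function and `{liminf < q}` has probability `0` or `1`. If it had
probability `1` for some `q < L`, Steele's greedy covering of `[0, K)` by windows of length at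
most `N` on which the walk grows at rate at most `q` would give
`α K ≤ q K + K 𝔼(uncovered cost) + N 𝔼 p(g₀)`, and the uncovered cost tends to `0` as
`N → ∞`; hence `L ≤ q`.
-/

open MeasureTheory ProbabilityTheory Filter Topology Finset LinearGrowth

section OrbitSeminorm

variable {G X : Type*} [Group G] [MetricSpace X] [MulAction G X]

def orbitSeminorm (hiso : ∀ g : G, Isometry (fun y : X => g • y)) (x : X) :
    GroupSeminorm G where
  toFun g := dist x (g • x)
  map_one' := by rw [one_smul, dist_self]
  mul_le' g h := by
    rw [mul_smul, ← (hiso g).dist_eq x (h • x)]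
    exact dist_triangle _ _ _
  inv' g := by
    rw [← (hiso g).dist_eq x (g⁻¹ • x), smul_inv_smul, dist_comm]

end OrbitSeminorm

section Walk

variable {M : Type*} [Monoid M]

def walk (s : ℕ → M) (n : ℕ) : M := ((List.range n).map s).prod

@[simp]
lemma walk_zero (s : ℕ → M) : walk s 0 = 1 := rfl

@[simp]
lemma walk_one (s : ℕ → M) : walk s 1 = s 0 := by simp [walk]

lemma walk_add (s : ℕ → M) (n m : ℕ) :
    walk s (n + m) = walk s n * walk (fun j => s (n + j)) m := by
  simp [walk, List.range_add, Function.comp_def]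

lemma walk_congr {s t : ℕ → M} {n : ℕ} (h : ∀ i < n, s i = t i) : walk s n = walk t n := by
  simp only [walk]
  congr 1
  exact List.map_congr_left fun i hi => h i (List.mem_range.1 hi)

end Walk

lemma tendsto_div_natCast_of_tendsto_average {u : ℕ → ℝ} {c : ℝ}
    (h : Tendsto (fun n : ℕ => (∑ i ∈ range n, u i) / n) atTop (𝓝 c)) :
    Tendsto (fun n : ℕ => u n / n) atTop (𝓝 0) := by
  have h_succ : Tendsto (fun n : ℕ => (∑ i ∈ range (n + 1), u i) / (n + 1 : ℕ)) atTop (𝓝 c) :=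
    h.comp (tendsto_add_atTop_nat 1)
  have h_ratio : Tendsto (fun n : ℕ => 1 + 1 / (n : ℝ)) atTop (𝓝 1) := by
    simpa using tendsto_one_div_atTop_nhds_zero_nat.const_add (1 : ℝ)
  have h_diff := (h_succ.mul h_ratio).sub h
  rw [mul_one, sub_self] at h_diff
  refine h_diff.congr' ?_
  filter_upwards [eventually_ne_atTop 0] with n hn
  have hn' : (n : ℝ) ≠ 0 := Nat.cast_ne_zero.2 hn
  rw [sum_range_succ]
  push_cast
  field_simp
  ring

lemma linearGrowthInf_coe_eq_of_abs_sub_le {u v : ℕ → ℝ} {C : ℝ}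
    (h : ∀ᶠ n in atTop, |u n - v n| ≤ C) :
    linearGrowthInf (fun n => (u n : EReal)) = linearGrowthInf (fun n => (v n : EReal)) := by
  have h_le : ∀ {x y : ℕ → ℝ}, (∀ᶠ n in atTop, |x n - y n| ≤ C) →
      linearGrowthInf (fun n => (x n : EReal)) ≤ linearGrowthInf (fun n => (y n : EReal)) :=
    fun h => linearGrowthInf_le_of_eventually_le (EReal.coe_ne_top C) <| h.mono fun n hn => by
      exact_mod_cast sub_le_iff_le_add'.1 (abs_le.1 hn).2
  exact le_antisymm (h_le h) (h_le (h.mono fun n hn => by rwa [abs_sub_comm]))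

lemma frequently_le_mul_of_linearGrowthInf_lt {u : ℕ → ℝ} {q : ℝ}
    (h : linearGrowthInf (fun n => (u n : EReal)) < q) : ∃ᶠ n in atTop, u n ≤ q * n :=
  (frequently_le_mul h).mono fun n hn => by exact_mod_cast hn

lemma eventually_lt_div_of_lt_linearGrowthInf {u : ℕ → ℝ} {b : ℝ}
    (h : b < linearGrowthInf (fun n => (u n : EReal))) : ∀ᶠ n : ℕ in atTop, b < u n / n := by
  obtain ⟨q, hbq, hq⟩ := EReal.exists_rat_btwn_of_lt h
  filter_upwards [eventually_mul_le hq, eventually_gt_atTop 0] with n hn hn0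
  calc b < q := by exact_mod_cast hbq
    _ ≤ u n / n := (le_div_iff₀ (by exact_mod_cast hn0)).2 (by exact_mod_cast hn)

open Classical in
/-- `c n` is the cost of the first `n` steps from the current time. -/
noncomputable def uncoveredCost (c : ℕ → ℝ) (q : ℝ) (N : ℕ) : ℝ :=
  if ∃ n, 1 ≤ n ∧ n ≤ N ∧ c n ≤ q * n then 0 else c 1

lemma uncoveredCost_nonneg {c : ℕ → ℝ} (hc : ∀ n, 0 ≤ c n) (q : ℝ) (N : ℕ) :
    0 ≤ uncoveredCost c q N := by
  unfold uncoveredCost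
  split_ifs
  exacts [le_rfl, hc 1]

lemma uncoveredCost_le {c : ℕ → ℝ} (hc : ∀ n, 0 ≤ c n) (q : ℝ) (N : ℕ) :
    uncoveredCost c q N ≤ c 1 := by
  unfold uncoveredCost
  split_ifs
  exacts [hc 1, le_rfl]

lemma uncoveredCost_congr {c c' : ℕ → ℝ} {q : ℝ} {N : ℕ} (h : ∀ n ≤ N + 1, c n = c' n) :
    uncoveredCost c q N = uncoveredCost c' q N := by
  classical
  have h_iff : (∃ n, 1 ≤ n ∧ n ≤ N ∧ c n ≤ q * n) ↔ ∃ n, 1 ≤ n ∧ n ≤ N ∧ c' n ≤ q * n :=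
    exists_congr fun n => and_congr_right fun _ => and_congr_right fun hn => by
      rw [h n (by omega)]
  rw [uncoveredCost, uncoveredCost, h 1 (by omega)]
  exact if_congr h_iff rfl rfl

/-- `a k n` is the cost of the time window `[k, k + n)`. -/
structure IsSubadditiveCocycle (a : ℕ → ℕ → ℝ) : Prop where
  nonneg : ∀ k n, 0 ≤ a k n
  zero : ∀ k, a k 0 = 0
  add_le : ∀ k n m, a k (n + m) ≤ a k n + a (k + n) m

namespace IsSubadditiveCocycle

variable {a : ℕ → ℕ → ℝ}

lemma le_sum_one (ha : IsSubadditiveCocycle a) (k n : ℕ) :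
    a k n ≤ ∑ i ∈ range n, a (k + i) 1 := by
  induction n with
  | zero => simp [ha.zero]
  | succ n ih =>
    rw [sum_range_succ]
    linarith [ha.add_le k n 1]

lemma le_sum_blocks (ha : IsSubadditiveCocycle a) (k Q : ℕ) :
    a 0 (Q * k) ≤ ∑ j ∈ range Q, a (j * k) k := by
  induction Q with
  | zero => simp [ha.zero]
  | succ Q ih =>
    have h_step := ha.add_le 0 (Q * k) k
    rw [zero_add] at h_step
    rw [sum_range_succ, Nat.succ_mul]
    linarith

lemma le_sum_blocks_add_sum_one (ha : IsSubadditiveCocycle a) {k : ℕ} (hk : 0 < k) (n : ℕ) :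
    a 0 n ≤ ∑ j ∈ range (n / k), a (j * k) k + ∑ i ∈ range k, a (n / k * k + i) 1 := by
  have h_split := ha.add_le 0 (n / k * k) (n % k)
  rw [Nat.div_add_mod', zero_add] at h_split
  have h_rem : ∑ i ∈ range (n % k), a (n / k * k + i) 1 ≤ ∑ i ∈ range k, a (n / k * k + i) 1 :=
    sum_le_sum_of_subset_of_nonneg (range_subset_range.2 (Nat.mod_lt n hk).le)
      fun i _ _ => ha.nonneg _ _
  linarith [ha.le_sum_blocks k (n / k), ha.le_sum_one (n / k * k) (n % k)]

lemma eventually_div_lt (ha : IsSubadditiveCocycle a) {k : ℕ} (hk : 0 < k) {c b : ℝ}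
    (h_blocks : Tendsto (fun Q : ℕ => (∑ j ∈ range Q, a (j * k) k) / Q) atTop (𝓝 c))
    (h_rem : Tendsto (fun Q : ℕ => (∑ i ∈ range k, a (Q * k + i) 1) / Q) atTop (𝓝 0))
    (hb : c / k < b) :
    ∀ᶠ n in atTop, a 0 n / n < b := by
  set B : ℕ → ℝ := fun Q => ∑ j ∈ range Q, a (j * k) k + ∑ i ∈ range k, a (Q * k + i) 1
  have hB_nonneg : ∀ Q, 0 ≤ B Q := fun Q =>
    add_nonneg (sum_nonneg fun _ _ => ha.nonneg _ _) (sum_nonneg fun _ _ => ha.nonneg _ _)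
  have hB_lim : Tendsto (fun Q : ℕ => B Q / (Q * k)) atTop (𝓝 (c / k)) := by
    have := (h_blocks.add h_rem).div_const (k : ℝ)
    rw [add_zero] at this
    refine this.congr fun Q => ?_
    simp only [B, add_div, div_div]
  filter_upwards [(Nat.tendsto_div_const_atTop hk.ne').eventually
    (hB_lim.eventually_lt_const hb), eventually_ge_atTop k] with n h_lt hkn
  have hQ : (0 : ℝ) < (n / k : ℕ) := by exact_mod_cast Nat.div_pos hkn hk
  have h_le : ((n / k : ℕ) : ℝ) * k ≤ n := by exact_mod_cast Nat.div_mul_le_self n k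
  calc a 0 n / n ≤ B (n / k) / n :=
        div_le_div_of_nonneg_right (ha.le_sum_blocks_add_sum_one hk n) (Nat.cast_nonneg n)
    _ ≤ B (n / k) / ((n / k : ℕ) * k) :=
        div_le_div_of_nonneg_left (hB_nonneg _) (by positivity) h_le
    _ < b := h_lt

/-- Steele's covering: walking greedily from time `j`, jump over a window of cost at most `q`
per step whenever one of length `≤ N` starts at the current time, and otherwise pay one step;
the last `N` steps are paid for one by one. -/
lemma le_covering (ha : IsSubadditiveCocycle a) {q : ℝ} (hq : 0 ≤ q) (N K : ℕ) :
    ∀ j ≤ K, a j (K - j) ≤ q * (K - j : ℕ) + ∑ i ∈ Ico j K, uncoveredCost (a i) q N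
      + ∑ i ∈ Ico (K - N) K, a i 1 := by
  intro j hj
  induction hm : K - j using Nat.strong_induction_on generalizing j with
  | _ m ih =>
  subst hm
  have h_qm : 0 ≤ q * (K - j : ℕ) := by positivity
  rcases le_or_gt (K - N) j with h_end | h_far
  · have h_crude : a j (K - j) ≤ ∑ i ∈ Ico (K - N) K, a i 1 := by
      calc a j (K - j) ≤ ∑ i ∈ range (K - j), a (j + i) 1 := ha.le_sum_one j (K - j)
        _ = ∑ i ∈ Ico j K, a i 1 := (sum_Ico_eq_sum_range (fun i => a i 1) j K).symm
        _ ≤ _ := sum_le_sum_of_subset_of_nonneg (Ico_subset_Ico h_end le_rfl)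
            fun i _ _ => ha.nonneg i 1
    linarith [sum_nonneg fun i (_ : i ∈ Ico j K) => uncoveredCost_nonneg (ha.nonneg i) q N]
  by_cases h_good : ∃ n, 1 ≤ n ∧ n ≤ N ∧ a j n ≤ q * n
  · obtain ⟨n, hn1, hnN, h_cost⟩ := h_good
    have h_split := ha.add_le j n (K - (j + n))
    rw [show n + (K - (j + n)) = K - j by omega] at h_split
    have h_rest := ih (K - (j + n)) (by omega) (j + n) (by omega) rfl
    have h_q : q * n + q * (K - (j + n) : ℕ) = q * (K - j : ℕ) := by
      rw [← mul_add, ← Nat.cast_add, show n + (K - (j + n)) = K - j by omega]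
    have h_unc : ∑ i ∈ Ico (j + n) K, uncoveredCost (a i) q N
        ≤ ∑ i ∈ Ico j K, uncoveredCost (a i) q N :=
      sum_le_sum_of_subset_of_nonneg (Ico_subset_Ico (by omega) le_rfl)
        fun i _ _ => uncoveredCost_nonneg (ha.nonneg i) q N
    linarith
  · have h_split := ha.add_le j 1 (K - (j + 1))
    rw [show 1 + (K - (j + 1)) = K - j by omega] at h_split
    have h_rest := ih (K - (j + 1)) (by omega) (j + 1) (by omega) rfl
    have h_first : ∑ i ∈ Ico j K, uncoveredCost (a i) q N
        = a j 1 + ∑ i ∈ Ico (j + 1) K, uncoveredCost (a i) q N := by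
      rw [sum_eq_sum_Ico_succ_bot (by omega), uncoveredCost, if_neg h_good]
    have h_q : q * (K - (j + 1) : ℕ) ≤ q * (K - j : ℕ) := by gcongr; omega
    linarith

end IsSubadditiveCocycle

namespace GroupSeminorm

variable {G : Type*} [Group G] (p : GroupSeminorm G)

lemma isSubadditiveCocycle_walk (s : ℕ → G) :
    IsSubadditiveCocycle fun k n => p (walk (fun j => s (k + j)) n) where
  nonneg _ _ := apply_nonneg p _
  zero _ := by simp
  add_le k n m := by
    rw [walk_add]
    simpa only [add_assoc] using map_mul_le_add p _ _

lemma apply_walk_le_sum (s : ℕ → G) (n : ℕ) : p (walk s n) ≤ ∑ i ∈ range n, p (s i) := by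
  simpa using (p.isSubadditiveCocycle_walk s).le_sum_one 0 n

lemma apply_walk_le_covering (s : ℕ → G) {q : ℝ} (hq : 0 ≤ q) (N K : ℕ) :
    p (walk s K) ≤ q * K
      + ∑ i ∈ range K, uncoveredCost (fun n => p (walk (fun j => s (i + j)) n)) q N
      + ∑ i ∈ Ico (K - N) K, p (s i) := by
  simpa using (p.isSubadditiveCocycle_walk s).le_covering hq N K 0 K.zero_le

lemma abs_sub_apply_walk_le (s : ℕ → G) (k m : ℕ) :
    |p (walk s (k + m)) - p (walk (fun j => s (k + j)) m)| ≤ p (walk s k) := by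
  simpa [walk_add] using abs_sub_map_le_div p (walk s (k + m)) (walk (fun j => s (k + j)) m)

lemma dependsOn_walk (n : ℕ) : DependsOn (fun s : ℕ → G => p (walk s n)) (range n) :=
  fun _ _ h => congrArg p (walk_congr fun i hi => h i (by simpa using hi))

lemma dependsOn_uncoveredCost (q : ℝ) (N : ℕ) :
    DependsOn (fun s : ℕ → G => uncoveredCost (fun n => p (walk s n)) q N) (range (N + 1)) :=
  fun _ _ h => uncoveredCost_congr fun n hn =>
    congrArg p (walk_congr fun i hi => h i (by simp only [coe_range, Set.mem_Iio]; omega))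

end GroupSeminorm

section IidSequence

variable {β Ω : Type*} [MeasurableSpace β] {mΩ : MeasurableSpace Ω} {P : Measure Ω}
  {g : ℕ → Ω → β}

lemma map_shift_restrict_eq_pi (hmeas : ∀ n, Measurable (g n)) (hindep : iIndepFun g P)
    (hident : ∀ n, IdentDistrib (g n) (g 0) P P) (S : Finset ℕ) (k : ℕ) :
    P.map (fun ω (i : (S : Set ℕ)) => g (k + i) ω) = Measure.pi fun _ => P.map (g 0) := by
  have h_inj : Function.Injective fun i : (S : Set ℕ) => k + (i : ℕ) :=
    fun i j h => Subtype.ext (Nat.add_left_cancel h)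
  rw [(hindep.precomp h_inj).map_fun_eq_pi_map fun i => (hmeas _).aemeasurable]
  simp only [(hident _).map_eq]

lemma measure_eq_zero_or_one_of_measurableSet_tail (hmeas : ∀ n, Measurable (g n))
    (hindep : iIndepFun g P) {t : Set Ω}
    (ht : ∀ k, MeasurableSet[⨆ i ≥ k, MeasurableSpace.comap (g i) inferInstance] t) :
    P t = 0 ∨ P t = 1 := by
  refine measure_zero_or_one_of_measurableSet_limsup_atTop (fun n => (hmeas n).comap_le)
    ((iIndepFun_iff_iIndep _ _ _).1 hindep) ?_
  rw [limsup_eq_iInf_iSup_of_nat]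
  exact MeasurableSpace.measurableSet_iInf.2 ht

variable [Countable β] [MeasurableSingletonClass β] {Ψ Ψ' : (ℕ → β) → ℝ} {S T : Finset ℕ}

lemma measurable_comp_of_dependsOn {m : MeasurableSpace Ω} (hΨ : DependsOn Ψ S)
    (hg : ∀ i ∈ S, Measurable[m] (g i)) : Measurable[m] fun ω => Ψ fun i => g i ω := by
  obtain ⟨Φ, rfl⟩ := dependsOn_iff_exists_comp.1 hΨ
  exact (measurable_of_countable Φ).comp (measurable_pi_lambda _ fun i => hg i i.2)

lemma identDistrib_comp_shift (hmeas : ∀ n, Measurable (g n)) (hindep : iIndepFun g P)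
    (hident : ∀ n, IdentDistrib (g n) (g 0) P P) (hΨ : DependsOn Ψ S) (k : ℕ) :
    IdentDistrib (fun ω => Ψ fun i => g (k + i) ω) (fun ω => Ψ fun i => g i ω) P P := by
  obtain ⟨Φ, rfl⟩ := dependsOn_iff_exists_comp.1 hΨ
  have h_block : IdentDistrib (fun ω (i : (S : Set ℕ)) => g (k + i) ω)
      (fun ω (i : (S : Set ℕ)) => g (0 + i) ω) P P :=
    ⟨(measurable_pi_lambda _ fun i => hmeas _).aemeasurable,
      (measurable_pi_lambda _ fun i => hmeas _).aemeasurable,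
      by rw [map_shift_restrict_eq_pi hmeas hindep hident,
        map_shift_restrict_eq_pi hmeas hindep hident]⟩
  have h := h_block.comp (measurable_of_countable Φ)
  simp only [zero_add] at h
  exact h

lemma indepFun_comp_shift (hmeas : ∀ n, Measurable (g n)) (hindep : iIndepFun g P)
    (hΨ : DependsOn Ψ S) (hΨ' : DependsOn Ψ' T) {k k' : ℕ}
    (h_disj : Disjoint (S.image (k + ·)) (T.image (k' + ·))) :
    IndepFun (fun ω => Ψ fun i => g (k + i) ω) (fun ω => Ψ' fun i => g (k' + i) ω) P := by
  obtain ⟨Φ, rfl⟩ := dependsOn_iff_exists_comp.1 hΨ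
  obtain ⟨Φ', rfl⟩ := dependsOn_iff_exists_comp.1 hΨ'
  exact (hindep.indepFun_finset _ _ h_disj hmeas).comp
    (measurable_of_countable fun v => Φ fun i => v ⟨k + i, mem_image_of_mem _ i.2⟩)
    (measurable_of_countable fun v => Φ' fun i => v ⟨k' + i, mem_image_of_mem _ i.2⟩)

lemma ae_tendsto_average_blocks (hmeas : ∀ n, Measurable (g n)) (hindep : iIndepFun g P)
    (hident : ∀ n, IdentDistrib (g n) (g 0) P P) {k : ℕ} (hΨ : DependsOn Ψ (range k))
    (hint : Integrable (fun ω => Ψ fun i => g i ω) P) :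
    ∀ᵐ ω ∂P, Tendsto (fun Q : ℕ => (∑ j ∈ range Q, Ψ fun i => g (j * k + i) ω) / Q) atTop
      (𝓝 (∫ ω, Ψ (fun i => g i ω) ∂P)) := by
  have h_indep : ∀ j j', j < j' → IndepFun (fun ω => Ψ fun i => g (j * k + i) ω)
      (fun ω => Ψ fun i => g (j' * k + i) ω) P := fun j j' hjj' => by
    have : j * k + k ≤ j' * k := by nlinarith
    refine indepFun_comp_shift hmeas hindep hΨ hΨ (disjoint_left.2 ?_)
    simp only [mem_image, mem_range]
    omega
  have h_slln := strong_law_ae_real (fun j ω => Ψ fun i => g (j * k + i) ω)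
    (by simpa only [zero_mul, zero_add] using hint)
    (fun j j' hjj' => hjj'.lt_or_gt.elim (h_indep j j') fun h => (h_indep j' j h).symm)
    (fun j => (identDistrib_comp_shift hmeas hindep hident hΨ _).trans
      (by simpa only [zero_mul, zero_add] using
        (identDistrib_comp_shift hmeas hindep hident hΨ 0).symm))
  simpa only [zero_mul, zero_add] using h_slln

end IidSequence

section RandomWalk

variable {G Ω : Type*} [Group G] [Countable G] [MeasurableSpace G] [MeasurableSingletonClass G]
  {mΩ : MeasurableSpace Ω} {P : Measure Ω} {g : ℕ → Ω → G}

namespace GroupSeminorm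

lemma integrable_apply (p : GroupSeminorm G) (hident : ∀ n, IdentDistrib (g n) (g 0) P P)
    (hint : Integrable (fun ω => p (g 0 ω)) P) (i : ℕ) : Integrable (fun ω => p (g i ω)) P :=
  ((hident i).comp (measurable_of_countable p)).integrable_iff.2 hint

lemma integrable_walk (p : GroupSeminorm G) (hmeas : ∀ n, Measurable (g n))
    (hident : ∀ n, IdentDistrib (g n) (g 0) P P) (hint : Integrable (fun ω => p (g 0 ω)) P)
    (n : ℕ) : Integrable (fun ω => p (walk (fun i => g i ω) n)) P :=
  (integrable_finsetSum _ fun i _ => p.integrable_apply hident hint i).mono'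
    (measurable_comp_of_dependsOn (p.dependsOn_walk n) fun i _ => hmeas i).aestronglyMeasurable
    (ae_of_all _ fun ω => by
      rw [Real.norm_eq_abs, abs_of_nonneg (apply_nonneg p _)]
      exact p.apply_walk_le_sum _ n)

lemma integrable_uncoveredCost (p : GroupSeminorm G) (hmeas : ∀ n, Measurable (g n))
    (hident : ∀ n, IdentDistrib (g n) (g 0) P P) (hint : Integrable (fun ω => p (g 0 ω)) P)
    (q : ℝ) (N : ℕ) :
    Integrable (fun ω => uncoveredCost (fun n => p (walk (fun i => g i ω) n)) q N) P :=
  (p.integrable_apply hident hint 0).mono'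
    (measurable_comp_of_dependsOn (p.dependsOn_uncoveredCost q N)
      fun i _ => hmeas i).aestronglyMeasurable
    (ae_of_all _ fun ω => by
      rw [Real.norm_eq_abs, abs_of_nonneg (uncoveredCost_nonneg (fun n => apply_nonneg p _) q N)]
      simpa using uncoveredCost_le (fun n => apply_nonneg p (walk (fun i => g i ω) n)) q N)

lemma subadditive_integral_walk (p : GroupSeminorm G) (hmeas : ∀ n, Measurable (g n))
    (hindep : iIndepFun g P) (hident : ∀ n, IdentDistrib (g n) (g 0) P P)
    (hint : Integrable (fun ω => p (g 0 ω)) P) :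
    Subadditive fun n => ∫ ω, p (walk (fun i => g i ω) n) ∂P := by
  intro n m
  dsimp only
  have h_shift := identDistrib_comp_shift hmeas hindep hident (p.dependsOn_walk m) n
  have h_int := p.integrable_walk hmeas hident hint
  rw [← h_shift.integral_eq, ← integral_add (h_int n) (h_shift.integrable_iff.2 (h_int m))]
  refine integral_mono (h_int _) ((h_int n).add (h_shift.integrable_iff.2 (h_int m))) fun ω => ?_
  simpa only [walk_add] using map_mul_le_add p _ _

lemma measurable_linearGrowthInf_walk (p : GroupSeminorm G) (k : ℕ) :
    Measurable[⨆ i ≥ k, MeasurableSpace.comap (g i) inferInstance]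
      fun ω => linearGrowthInf fun n => (p (walk (fun i => g i ω) n) : EReal) := by
  have h_eq : ∀ ω, linearGrowthInf (fun n => (p (walk (fun i => g i ω) n) : EReal))
      = linearGrowthInf fun n => (p (walk (fun i => g (k + i) ω) (n - k)) : EReal) := fun ω =>
    linearGrowthInf_coe_eq_of_abs_sub_le <| (eventually_ge_atTop k).mono fun n hn => by
      obtain ⟨m, rfl⟩ := Nat.exists_eq_add_of_le hn
      simpa only [Nat.add_sub_cancel_left] using p.abs_sub_apply_walk_le (g · ω) k m
  simp_rw [h_eq]
  refine Measurable.liminf fun n =>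
    (EReal.monotone_div_right_of_nonneg (Nat.cast_nonneg' n)).measurable.comp <|
      Measurable.coe_real_ereal <|
        measurable_comp_of_dependsOn (p.dependsOn_walk (n - k)) fun i _ => ?_
  exact (comap_measurable (g (k + i))).mono
    (le_iSup₂_of_le (k + i) (Nat.le_add_right k i) le_rfl) le_rfl

lemma integral_walk_le [IsProbabilityMeasure P] (p : GroupSeminorm G)
    (hmeas : ∀ n, Measurable (g n)) (hindep : iIndepFun g P)
    (hident : ∀ n, IdentDistrib (g n) (g 0) P P) (hint : Integrable (fun ω => p (g 0 ω)) P)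
    {q : ℝ} (hq : 0 ≤ q) (N K : ℕ) :
    ∫ ω, p (walk (fun i => g i ω) K) ∂P ≤ q * K
      + K * ∫ ω, uncoveredCost (fun n => p (walk (fun i => g i ω) n)) q N ∂P
      + N * ∫ ω, p (g 0 ω) ∂P := by
  have h_shift (i : ℕ) :=
    identDistrib_comp_shift hmeas hindep hident (p.dependsOn_uncoveredCost q N) i
  have h_step (i : ℕ) : ∫ ω, p (g i ω) ∂P = ∫ ω, p (g 0 ω) ∂P :=
    ((hident i).comp (measurable_of_countable p)).integral_eq
  have h_int_unc : Integrable (fun ω => ∑ i ∈ range K,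
      uncoveredCost (fun n => p (walk (fun j => g (i + j) ω) n)) q N) P :=
    integrable_finsetSum _ fun i _ =>
      (h_shift i).integrable_iff.2 (p.integrable_uncoveredCost hmeas hident hint q N)
  have h_int_head : Integrable (fun ω => q * K + ∑ i ∈ range K,
      uncoveredCost (fun n => p (walk (fun j => g (i + j) ω) n)) q N) P :=
    (integrable_const _).add h_int_unc
  have h_int_tail : Integrable (fun ω => ∑ i ∈ Ico (K - N) K, p (g i ω)) P :=
    integrable_finsetSum _ fun i _ => p.integrable_apply hident hint i
  have h_card : ((Ico (K - N) K).card : ℝ) ≤ N := by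
    rw [Nat.card_Ico]
    exact_mod_cast (by omega : K - (K - N) ≤ N)
  calc ∫ ω, p (walk (fun i => g i ω) K) ∂P
      ≤ ∫ ω, (q * K + ∑ i ∈ range K,
          uncoveredCost (fun n => p (walk (fun j => g (i + j) ω) n)) q N
          + ∑ i ∈ Ico (K - N) K, p (g i ω)) ∂P :=
        integral_mono (p.integrable_walk hmeas hident hint K) (h_int_head.add h_int_tail)
          fun ω => p.apply_walk_le_covering _ hq N K
    _ = q * K + K * ∫ ω, uncoveredCost (fun n => p (walk (fun i => g i ω) n)) q N ∂P
          + (Ico (K - N) K).card * ∫ ω, p (g 0 ω) ∂P := by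
        rw [integral_add h_int_head h_int_tail, integral_add (integrable_const _) h_int_unc,
          integral_finsetSum _ fun i _ => (h_shift i).integrable_iff.2
            (p.integrable_uncoveredCost hmeas hident hint q N),
          integral_finsetSum _ fun i _ => p.integrable_apply hident hint i]
        simp only [(h_shift _).integral_eq, h_step, integral_const, probReal_univ, one_smul,
          sum_const, card_range, nsmul_eq_mul]
    _ ≤ _ := by gcongr

lemma tendsto_integral_uncoveredCost (p : GroupSeminorm G) (hmeas : ∀ n, Measurable (g n))
    (hident : ∀ n, IdentDistrib (g n) (g 0) P P) (hint : Integrable (fun ω => p (g 0 ω)) P)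
    {q : ℝ} (h : ∀ᵐ ω ∂P, linearGrowthInf (fun n => (p (walk (fun i => g i ω) n) : EReal)) < q) :
    Tendsto (fun N : ℕ => ∫ ω, uncoveredCost (fun n => p (walk (fun i => g i ω) n)) q N ∂P)
      atTop (𝓝 0) := by
  rw [← integral_zero Ω ℝ]
  refine tendsto_integral_of_dominated_convergence (fun ω => p (g 0 ω))
    (fun N => (p.integrable_uncoveredCost hmeas hident hint q N).aestronglyMeasurable)
    hint (fun N => ae_of_all _ fun ω => ?_) (h.mono fun ω hω => ?_)
  · rw [Real.norm_eq_abs, abs_of_nonneg (uncoveredCost_nonneg (fun n => apply_nonneg p _) q N)]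
    simpa using uncoveredCost_le (fun n => apply_nonneg p (walk (fun i => g i ω) n)) q N
  · obtain ⟨n, h_le, hn⟩ :=
      ((frequently_le_mul_of_linearGrowthInf_lt hω).and_eventually (eventually_ge_atTop 1)).exists
    refine tendsto_const_nhds.congr' ((eventually_ge_atTop n).mono fun N hN => ?_)
    exact (if_pos ⟨n, hn, hN, h_le⟩).symm

lemma le_of_ae_linearGrowthInf_lt [IsProbabilityMeasure P] (p : GroupSeminorm G)
    (hmeas : ∀ n, Measurable (g n)) (hindep : iIndepFun g P)
    (hident : ∀ n, IdentDistrib (g n) (g 0) P P) (hint : Integrable (fun ω => p (g 0 ω)) P)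
    {L q : ℝ} (hL : Tendsto (fun n : ℕ => (∫ ω, p (walk (fun i => g i ω) n) ∂P) / n) atTop (𝓝 L))
    (h : ∀ᵐ ω ∂P, linearGrowthInf (fun n => (p (walk (fun i => g i ω) n) : EReal)) < q) :
    L ≤ q := by
  have hq : 0 ≤ q := by
    obtain ⟨ω, hω⟩ := h.exists
    have h_nonneg :
        (0 : EReal) ≤ linearGrowthInf fun n => (p (walk (fun i => g i ω) n) : EReal) :=
      Eventually.le_linearGrowthInf (Eventually.of_forall fun n => by simp)
    exact_mod_cast (h_nonneg.trans_lt hω).le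
  set β : ℕ → ℝ := fun N => ∫ ω, uncoveredCost (fun n => p (walk (fun i => g i ω) n)) q N ∂P
  set m : ℝ := ∫ ω, p (g 0 ω) ∂P
  have h_N (N : ℕ) : L ≤ q + β N := by
    have h_lim : Tendsto (fun K : ℕ => q + β N + N * m / K) atTop (𝓝 (q + β N)) := by
      simpa using tendsto_const_nhds.add (tendsto_const_div_atTop_nhds_zero_nat ((N : ℝ) * m))
    refine le_of_tendsto_of_tendsto hL h_lim ((eventually_gt_atTop 0).mono fun K hK => ?_)
    have hK' : (0 : ℝ) < K := by exact_mod_cast hK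
    rw [div_le_iff₀ hK']
    have := integral_walk_le p hmeas hindep hident hint hq N K
    calc _ ≤ q * K + K * β N + N * m := this
      _ = (q + β N + N * m / K) * K := by field_simp
  simpa using
    ge_of_tendsto' ((tendsto_integral_uncoveredCost p hmeas hident hint h).const_add q) h_N

lemma ae_le_linearGrowthInf [IsProbabilityMeasure P] (p : GroupSeminorm G)
    (hmeas : ∀ n, Measurable (g n)) (hindep : iIndepFun g P)
    (hident : ∀ n, IdentDistrib (g n) (g 0) P P) (hint : Integrable (fun ω => p (g 0 ω)) P)
    {L : ℝ} (hL : Tendsto (fun n : ℕ => (∫ ω, p (walk (fun i => g i ω) n) ∂P) / n) atTop (𝓝 L)) :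
    ∀ᵐ ω ∂P, (L : EReal) ≤ linearGrowthInf fun n => (p (walk (fun i => g i ω) n) : EReal) := by
  set ν : Ω → EReal := fun ω => linearGrowthInf fun n => (p (walk (fun i => g i ω) n) : EReal)
  have h_null (q : ℚ) (hq : (q : ℝ) < L) : ∀ᵐ ω ∂P, ¬ ν ω < (q : ℝ) := by
    have h_tail (k : ℕ) : MeasurableSet[⨆ i ≥ k, MeasurableSpace.comap (g i) inferInstance]
        {ω | ν ω < (q : ℝ)} :=
      p.measurable_linearGrowthInf_walk k measurableSet_Iio
    rcases measure_eq_zero_or_one_of_measurableSet_tail hmeas hindep h_tail with h0 | h1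
    · exact measure_eq_zero_iff_ae_notMem.1 h0
    · have h_meas : MeasurableSet {ω | ν ω < (q : ℝ)} :=
        iSup₂_le (fun i _ => (hmeas i).comap_le) _ (h_tail 0)
      refine absurd (le_of_ae_linearGrowthInf_lt p hmeas hindep hident hint hL ?_) (not_le.2 hq)
      exact (ae_iff_measure_eq h_meas.nullMeasurableSet).2 (by rw [h1, measure_univ])
  have h_all : ∀ᵐ ω ∂P, ∀ q : ℚ, (q : ℝ) < L → ¬ ν ω < (q : ℝ) := ae_all_iff.2 fun q =>
    if hq : (q : ℝ) < L then (h_null q hq).mono fun _ h _ => h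
    else ae_of_all _ fun _ h => absurd h hq
  filter_upwards [h_all] with ω hω
  by_contra h
  obtain ⟨q, hνq, hqL⟩ := EReal.exists_rat_btwn_of_lt (not_le.1 h)
  exact hω q (by exact_mod_cast hqL) hνq

lemma ae_eventually_walk_div_lt (p : GroupSeminorm G) (hmeas : ∀ n, Measurable (g n))
    (hindep : iIndepFun g P) (hident : ∀ n, IdentDistrib (g n) (g 0) P P)
    (hint : Integrable (fun ω => p (g 0 ω)) P) :
    ∀ᵐ ω ∂P, ∀ k > 0, ∀ b, (∫ ω, p (walk (fun i => g i ω) k) ∂P) / k < b →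
      ∀ᶠ n in atTop, p (walk (fun i => g i ω) n) / n < b := by
  refine ae_all_iff.2 fun k => ?_
  rcases k.eq_zero_or_pos with rfl | hk
  · exact ae_of_all _ fun _ h => absurd h (lt_irrefl 0)
  have h_blocks := ae_tendsto_average_blocks hmeas hindep hident (p.dependsOn_walk k)
    (p.integrable_walk hmeas hident hint k)
  have h_steps := ae_tendsto_average_blocks hmeas hindep hident
    (Ψ := fun s => ∑ i ∈ range k, p (s i)) (fun s t h => sum_congr rfl fun i hi => by rw [h i hi])
    (integrable_finsetSum _ fun i _ => p.integrable_apply hident hint i)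
  filter_upwards [h_blocks, h_steps] with ω h_avg h_steps_avg _ b hb
  have h_rem := tendsto_div_natCast_of_tendsto_average h_steps_avg
  simpa using (p.isSubadditiveCocycle_walk (g · ω)).eventually_div_lt hk h_avg
    (by simpa using h_rem) hb

theorem ae_tendsto_walk_div [IsProbabilityMeasure P] (p : GroupSeminorm G)
    (hmeas : ∀ n, Measurable (g n)) (hindep : iIndepFun g P)
    (hident : ∀ n, IdentDistrib (g n) (g 0) P P) (hint : Integrable (fun ω => p (g 0 ω)) P) :
    ∃ L : ℝ, 0 ≤ L ∧ ∀ᵐ ω ∂P,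
      Tendsto (fun n : ℕ => p (walk (fun i => g i ω) n) / n) atTop (𝓝 L) := by
  have h_sub := p.subadditive_integral_walk hmeas hindep hident hint
  have h_nonneg (n : ℕ) : 0 ≤ (∫ ω, p (walk (fun i => g i ω) n) ∂P) / n :=
    div_nonneg (integral_nonneg fun _ => apply_nonneg p _) n.cast_nonneg
  have hL := h_sub.tendsto_lim ⟨0, Set.forall_mem_range.2 h_nonneg⟩
  refine ⟨h_sub.lim, ge_of_tendsto' hL h_nonneg, ?_⟩
  filter_upwards [p.ae_eventually_walk_div_lt hmeas hindep hident hint,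
    p.ae_le_linearGrowthInf hmeas hindep hident hint hL] with ω h_upper h_lower
  refine tendsto_order.2 ⟨fun b hb => eventually_lt_div_of_lt_linearGrowthInf
    ((EReal.coe_lt_coe_iff.2 hb).trans_le h_lower), fun b hb => ?_⟩
  obtain ⟨k, hkb, hk⟩ := ((hL.eventually (gt_mem_nhds hb)).and (eventually_gt_atTop 0)).exists
  exact h_upper k hk b hkb

end GroupSeminorm

end RandomWalk

theorem linear_drift_general {G X Ω : Type*} [Group G] [Countable G] [MeasurableSpace G]
    [MeasurableSingletonClass G] [MetricSpace X] [MulAction G X]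
    (hiso : ∀ g : G, Isometry (fun y : X => g • y)) (x : X)
    (μ : Measure G)
    (hmom : Integrable (fun g : G => dist x (g • x)) μ)
    {mΩ : MeasurableSpace Ω} (P : Measure Ω) [IsProbabilityMeasure P]
    (g : ℕ → Ω → G) (hmeas : ∀ n, Measurable (g n))
    (hindep : iIndepFun g P)
    (hdist : ∀ n, Measure.map (g n) P = μ) :
    ∃ L : ℝ, 0 ≤ L ∧ ∀ᵐ ω ∂P,
      Tendsto (fun n : ℕ => dist x ((((List.range n).map (fun i => g i ω)).prod) • x) / n)
        atTop (nhds L) := by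
  have hident (n : ℕ) : IdentDistrib (g n) (g 0) P P :=
    ⟨(hmeas n).aemeasurable, (hmeas 0).aemeasurable, by rw [hdist, hdist]⟩
  have hint : Integrable (fun ω => dist x (g 0 ω • x)) P :=
    (integrable_map_measure
      (measurable_of_countable fun h : G => dist x (h • x)).aestronglyMeasurable
      (hmeas 0).aemeasurable).1 (by rwa [hdist 0])
  exact (orbitSeminorm hiso x).ae_tendsto_walk_div hmeas hindep hident hint

/-- Linear drift: a random walk on a countable group `G` acting by isometries on a metric
space `X`, driven by a measure `μ` with finite first moment, has an almost sure linear
drift `L ≥ 0`: `d(x, g₁ ⋯ g_n x)/n → L` almost surely, where the increments `g_n` are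
i.i.d. with distribution `μ`. -/
theorem linear_drift {G X Ω : Type*} [Group G] [Countable G] [MeasurableSpace G]
    [MeasurableSingletonClass G] [MetricSpace X] [MulAction G X]
    (hiso : ∀ g : G, Isometry (fun y : X => g • y)) (x : X)
    (μ : Measure G) [IsProbabilityMeasure μ]
    (hmom : Integrable (fun g : G => dist x (g • x)) μ)
    {mΩ : MeasurableSpace Ω} (P : Measure Ω) [IsProbabilityMeasure P]
    (g : ℕ → Ω → G) (hmeas : ∀ n, Measurable (g n))
    (hindep : iIndepFun g P)
    (hdist : ∀ n, Measure.map (g n) P = μ) :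
    ∃ L : ℝ, 0 ≤ L ∧ ∀ᵐ ω ∂P,
      Tendsto (fun n : ℕ => dist x ((((List.range n).map (fun i => g i ω)).prod) • x) / n)
        atTop (nhds L) :=
  linear_drift_general hiso x μ hmom (mΩ := mΩ) P g hmeas hindep hdist
end

section
/- Let (Ω, ℙ) be a probability space, let k ≥ 1 be a natural number, let p > 1 be real and set q = p/(p − 1). Let (Y_i)_{i ≥ 1} be nonnegative measurable functions on Ω with E[Y_i^{kp}] ≤ M < ∞ for all i, and let τ : Ω → ℕ be measurable with ℙ(τ ≥ n) ≤ C·e^{−α n} for all n ∈ ℕ, for some constants C, α > 0. Then for all indices i₁ ≤ i₂ ≤ ⋯ ≤ i_k one has ∫_{{τ ≥ i_k}} Y_{i₁}·Y_{i₂}·⋯·Y_{i_k} dℙ ≤ M^{1/p}·C^{1/q}·e^{−(α/(kq))·(i₁ + ⋯ + i_k)}. -/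
open MeasureTheory Real

/-!
By the arithmetic–geometric mean inequality, `(Y_{i₁} ⋯ Y_{i_k})^p ≤ k⁻¹ ∑ⱼ Y_{iⱼ}^{kp}`, so the
product has `p`-th moment at most `M`. Hölder's inequality on the event `{τ ≥ i_k}` bounds the
integral by `M^{1/p} ℙ(τ ≥ i_k)^{1/q}`, and `i_k ≥ (i₁ + ⋯ + i_k)/k` turns the tail bound at `i_k`
into the exponential in the sum of the indices.
-/

theorem prod_rpow_le_inv_card_mul_sum_rpow {ι : Type*} [Fintype ι] [Nonempty ι] {y : ι → ℝ}
    (hy : ∀ j, 0 ≤ y j) (p : ℝ) :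
    (∏ j, y j) ^ p ≤ (Fintype.card ι : ℝ)⁻¹ * ∑ j, y j ^ ((Fintype.card ι : ℝ) * p) := by
  set n : ℝ := (Fintype.card ι : ℝ)
  have hn : 0 < n := by simp [n, Fintype.card_pos]
  calc (∏ j, y j) ^ p = ∏ j, (y j ^ (n * p)) ^ n⁻¹ := by
        rw [← Real.finsetProd_rpow _ _ fun j _ => hy j]
        refine Finset.prod_congr rfl fun j _ => ?_
        rw [← Real.rpow_mul (hy j), mul_comm n, mul_inv_cancel_right₀ hn.ne']
    _ ≤ ∑ j, n⁻¹ * y j ^ (n * p) :=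
        Real.geom_mean_le_arith_mean_weighted _ _ _ (fun _ _ => by positivity)
          (by simp [n, hn.ne']) fun j _ => rpow_nonneg (hy j) _
    _ = n⁻¹ * ∑ j, y j ^ (n * p) := (Finset.mul_sum _ _ _).symm

section Moments

variable {Ω : Type*} [MeasurableSpace Ω] {μ : Measure Ω}
  {ι : Type*} [Fintype ι] [Nonempty ι] {Y : ι → Ω → ℝ} {p : ℝ}

theorem integrable_prod_rpow (hY : ∀ j ω, 0 ≤ Y j ω) (hYm : ∀ j, AEMeasurable (Y j) μ)
    (hYint : ∀ j, Integrable (fun ω => Y j ω ^ ((Fintype.card ι : ℝ) * p)) μ) :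
    Integrable (fun ω => (∏ j, Y j ω) ^ p) μ := by
  have hbound : Integrable
      (fun ω => (Fintype.card ι : ℝ)⁻¹ * ∑ j, Y j ω ^ ((Fintype.card ι : ℝ) * p)) μ :=
    (integrable_finsetSum Finset.univ fun j _ => hYint j).const_mul _
  refine hbound.mono' ?_ (.of_forall fun ω => ?_)
  · exact (AEMeasurable.pow_const (by fun_prop) p).aestronglyMeasurable
  · rw [norm_of_nonneg (rpow_nonneg (Finset.prod_nonneg fun j _ => hY j ω) p)]
    exact prod_rpow_le_inv_card_mul_sum_rpow (fun j => hY j ω) p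

theorem integral_prod_rpow_le (hY : ∀ j ω, 0 ≤ Y j ω)
    (hYint : ∀ j, Integrable (fun ω => Y j ω ^ ((Fintype.card ι : ℝ) * p)) μ) {M : ℝ}
    (hM : ∀ j, ∫ ω, Y j ω ^ ((Fintype.card ι : ℝ) * p) ∂μ ≤ M) :
    ∫ ω, (∏ j, Y j ω) ^ p ∂μ ≤ M := by
  set n : ℝ := (Fintype.card ι : ℝ)
  have hn : 0 < n := by simp [n, Fintype.card_pos]
  calc ∫ ω, (∏ j, Y j ω) ^ p ∂μ ≤ ∫ ω, n⁻¹ * ∑ j, Y j ω ^ (n * p) ∂μ := by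
        refine integral_mono_of_nonneg (.of_forall fun ω => ?_)
          ((integrable_finsetSum Finset.univ fun j _ => hYint j).const_mul _)
          (.of_forall fun ω => prod_rpow_le_inv_card_mul_sum_rpow (fun j => hY j ω) p)
        exact rpow_nonneg (Finset.prod_nonneg fun j _ => hY j ω) p
    _ = n⁻¹ * ∑ j, ∫ ω, Y j ω ^ (n * p) ∂μ := by
        rw [integral_const_mul, integral_finsetSum Finset.univ fun j _ => hYint j]
    _ ≤ n⁻¹ * ∑ _j : ι, M := by gcongr with j; exact hM j
    _ = M := by simp [n, hn.ne']

end Moments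

theorem setIntegral_le_integral_rpow_mul_measureReal_rpow {Ω : Type*} [MeasurableSpace Ω]
    {μ : Measure Ω} {p q : ℝ} (hpq : p.HolderConjugate q) {f : Ω → ℝ}
    (hf_meas : AEStronglyMeasurable f μ) (hf : ∀ x, 0 ≤ f x)
    (hfp : Integrable (fun x => f x ^ p) μ) {A : Set Ω} (hA : MeasurableSet A) (hμA : μ A ≠ ⊤) :
    ∫ x in A, f x ∂μ ≤ (∫ x, f x ^ p ∂μ) ^ (1 / p) * μ.real A ^ (1 / q) := by
  have hf_Lp : MemLp f (ENNReal.ofReal p) μ := by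
    rw [← integrable_norm_rpow_iff hf_meas (by simp [hpq.pos]) ENNReal.ofReal_ne_top,
      ENNReal.toReal_ofReal hpq.nonneg]
    exact hfp.congr (.of_forall fun x => by simp only [norm_of_nonneg (hf x)])
  have hA_Lq : MemLp (A.indicator (1 : Ω → ℝ)) (ENNReal.ofReal q) μ :=
    memLp_indicator_const _ hA 1 (Or.inr hμA)
  have hA_nonneg : ∀ x, 0 ≤ A.indicator (1 : Ω → ℝ) x := Set.indicator_nonneg (by simp)
  have hA_rpow : ∀ x, A.indicator (1 : Ω → ℝ) x ^ q = A.indicator 1 x := fun x => by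
    by_cases hx : x ∈ A <;> simp [hx, zero_rpow hpq.symm.pos.ne']
  calc ∫ x in A, f x ∂μ = ∫ x, f x * A.indicator 1 x ∂μ := by
        rw [← integral_indicator hA]
        congr 1 with x
        by_cases hx : x ∈ A <;> simp [hx]
    _ ≤ (∫ x, f x ^ p ∂μ) ^ (1 / p) * (∫ x, A.indicator (1 : Ω → ℝ) x ^ q ∂μ) ^ (1 / q) :=
        integral_mul_le_Lp_mul_Lq_of_nonneg hpq (.of_forall hf) (.of_forall hA_nonneg)
          hf_Lp hA_Lq
    _ = (∫ x, f x ^ p ∂μ) ^ (1 / p) * μ.real A ^ (1 / q) := by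
        simp only [hA_rpow, integral_indicator_one hA]

theorem rpow_inv_le_of_le_mul_exp {x C α q k s n : ℝ} (hx : 0 ≤ x) (hC : 0 ≤ C) (hα : 0 ≤ α)
    (hq : 0 < q) (hk : 0 < k) (hs : s ≤ k * n) (h : x ≤ C * exp (-α * n)) :
    x ^ (1 / q) ≤ C ^ (1 / q) * exp (-(α / (k * q)) * s) := by
  calc x ^ (1 / q) ≤ (C * exp (-α * n)) ^ (1 / q) := by gcongr
    _ = C ^ (1 / q) * exp (-(α / (k * q) * (k * n))) := by
        rw [mul_rpow hC (exp_nonneg _), ← exp_mul]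
        field_simp
    _ ≤ C ^ (1 / q) * exp (-(α / (k * q)) * s) := by
        rw [neg_mul]
        gcongr

/-- Key estimate in Proposition 3.3: if `Y_i ≥ 0` have uniformly bounded `kp`-th moments and
`τ` has exponentially decaying tail, then for any nondecreasing indices `i₁ ≤ ⋯ ≤ i_k`,
`∫_{τ ≥ i_k} Y_{i₁} ⋯ Y_{i_k} ≤ M^{1/p} C^{1/q} e^{-(α/(kq))(i₁ + ⋯ + i_k)}`. -/
theorem integral_product_tail_bound {Ω : Type*} [MeasurableSpace Ω] (P : Measure Ω)
    [IsProbabilityMeasure P] (k : ℕ) (hk : 1 ≤ k) (p q : ℝ) (hp : 1 < p)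
    (hq : q = p / (p - 1))
    (Y : ℕ → Ω → ℝ) (hYmeas : ∀ i, Measurable (Y i)) (hYpos : ∀ i ω, 0 ≤ Y i ω)
    (M : ℝ) (hYint : ∀ i, Integrable (fun ω => Y i ω ^ ((k : ℝ) * p)) P)
    (hYmom : ∀ i, (∫ ω, Y i ω ^ ((k : ℝ) * p) ∂P) ≤ M)
    (τ : Ω → ℕ) (hτ : Measurable τ) (C α : ℝ) (hC : 0 < C) (hα : 0 < α)
    (htail : ∀ n : ℕ, (P {ω | n ≤ τ ω}).toReal ≤ C * Real.exp (-α * n))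
    (i : Fin k → ℕ) (hmono : Monotone i) :
    (∫ ω in {ω | i ⟨k - 1, by omega⟩ ≤ τ ω}, ∏ j, Y (i j) ω ∂P) ≤
      M ^ (1 / p) * C ^ (1 / q) * Real.exp (-(α / (k * q)) * ∑ j, (i j : ℝ)) := by
  have hpq : p.HolderConjugate q := (holderConjugate_iff_eq_conjExponent hp).2 hq
  have : Nonempty (Fin k) := ⟨⟨0, hk⟩⟩
  set last : Fin k := ⟨k - 1, by omega⟩
  have hYint' : ∀ j, Integrable (fun ω => Y (i j) ω ^ ((Fintype.card (Fin k) : ℝ) * p)) P := by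
    simpa using fun j => hYint (i j)
  have hmom : ∫ ω, (∏ j, Y (i j) ω) ^ p ∂P ≤ M :=
    integral_prod_rpow_le (fun j => hYpos (i j)) hYint' (by simpa using fun j => hYmom (i j))
  have hmom_nonneg : 0 ≤ ∫ ω, (∏ j, Y (i j) ω) ^ p ∂P :=
    integral_nonneg fun ω => rpow_nonneg (Finset.prod_nonneg fun j _ => hYpos (i j) ω) p
  have hsum : ∑ j, (i j : ℝ) ≤ k * i last := by
    simpa using Finset.sum_le_card_nsmul Finset.univ (fun j => (i j : ℝ)) (i last)
      fun j _ => Nat.cast_le.2 (hmono (Fin.le_def.2 (by simp [last]; omega)))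
  calc _ ≤ (∫ ω, (∏ j, Y (i j) ω) ^ p ∂P) ^ (1 / p) * P.real {ω | i last ≤ τ ω} ^ (1 / q) :=
        setIntegral_le_integral_rpow_mul_measureReal_rpow hpq
          (Finset.measurable_prod _ fun j _ => hYmeas (i j)).aestronglyMeasurable
          (fun ω => Finset.prod_nonneg fun j _ => hYpos (i j) ω)
          (integrable_prod_rpow (fun j => hYpos (i j)) (fun j => (hYmeas (i j)).aemeasurable)
            hYint') (hτ measurableSet_Ici) (measure_ne_top _ _)
    _ ≤ M ^ (1 / p) * (C ^ (1 / q) * exp (-(α / (k * q)) * ∑ j, (i j : ℝ))) := by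
        have hM : 0 ≤ M := hmom_nonneg.trans hmom
        gcongr
        exact rpow_inv_le_of_le_mul_exp measureReal_nonneg hC.le hα.le hpq.symm.pos
          (by exact_mod_cast hk) hsum (htail _)
    _ = _ := (mul_assoc ..).symm
end

section
/- For every real number k ≥ 1 there exists a constant c > 0, depending only on k, such that: (a) for every real R > 1, (2·√(R² − 1))^k ≤ c · 2·R^k·∫_{1/R}^{1} u^{k−1}/√(1 − u²) du; and (b) for every real R ≥ 2, 2·R^k·∫_{1/R}^{1} u^{k−1}/√(1 − u²) du ≤ c · (2·√(R² − 1))^k. -/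
/-!
With `a = 1 / R` one has `√(R² - 1) = R √(1 - a²)`, so both inequalities compare
`I(a) = ∫_a^1 u^(k-1) / √(1 - u²) du` with `(1 - a²)^(k/2)`. Since `u^(k-1) ≤ 1`, `I(a)` is at most
`∫_a^1 du / √(1 - u²) = arccos a ≤ π / 2`; since `u^(k-1) ≥ a^(k-1)` on `[a, 1]`, it is at least
`a^(k-1) arccos a ≥ a^(k-1) √(1 - a²)`. For small `a` this lower bound degenerates, and one uses
instead that `I` is decreasing.
-/

open Real MeasureTheory Set intervalIntegral

section ArcsinIntegral

variable {a b : ℝ}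

lemma intervalIntegrable_one_div_sqrt_one_sub_sq (ha : -1 ≤ a) (hab : a ≤ b) (hb : b ≤ 1) :
    IntervalIntegrable (fun u => 1 / √(1 - u ^ 2)) volume a b :=
  (intervalIntegrable_iff_integrableOn_Ioc_of_le hab).2 <|
    integrableOn_deriv_of_nonneg continuous_arcsin.continuousOn
      (fun x hx => hasDerivAt_arcsin (by linarith [hx.1]) (by linarith [hx.2]))
      (fun _ _ => by positivity)

lemma integral_one_div_sqrt_one_sub_sq (ha : -1 ≤ a) (hab : a ≤ b) (hb : b ≤ 1) :
    ∫ u in a..b, 1 / √(1 - u ^ 2) = arcsin b - arcsin a :=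
  integral_eq_sub_of_hasDerivAt_of_le hab continuous_arcsin.continuousOn
    (fun x hx => hasDerivAt_arcsin (by linarith [hx.1]) (by linarith [hx.2]))
    (intervalIntegrable_one_div_sqrt_one_sub_sq ha hab hb)

lemma integral_one_div_sqrt_one_sub_sq_eq_arccos (ha : -1 ≤ a) (ha1 : a ≤ 1) :
    ∫ u in a..1, 1 / √(1 - u ^ 2) = arccos a := by
  rw [integral_one_div_sqrt_one_sub_sq ha ha1 le_rfl, arcsin_one, arccos_eq_pi_div_two_sub_arcsin]

end ArcsinIntegral

lemma sqrt_one_sub_sq_le_arccos (x : ℝ) : √(1 - x ^ 2) ≤ arccos x :=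
  sin_arccos x ▸ sin_le (arccos_nonneg x)

noncomputable def flowIntegral (k a : ℝ) : ℝ := ∫ u in a..1, u ^ (k - 1) / √(1 - u ^ 2)

section FlowIntegral

variable {k a : ℝ}

lemma rpow_sub_one_div_sqrt_le (hk : 1 ≤ k) {u : ℝ} (hu : u ∈ Icc 0 1) :
    u ^ (k - 1) / √(1 - u ^ 2) ≤ 1 / √(1 - u ^ 2) :=
  div_le_div_of_nonneg_right (rpow_le_one hu.1 hu.2 (by linarith)) (sqrt_nonneg _)

lemma intervalIntegrable_rpow_sub_one_div_sqrt_one_sub_sq (hk : 1 ≤ k) (ha : 0 ≤ a) (ha1 : a ≤ 1) :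
    IntervalIntegrable (fun u => u ^ (k - 1) / √(1 - u ^ 2)) volume a 1 := by
  refine (intervalIntegrable_one_div_sqrt_one_sub_sq (by linarith) ha1 le_rfl).mono_fun'
    (by fun_prop : Measurable _).aestronglyMeasurable ?_
  rw [uIoc_of_le ha1]
  filter_upwards [ae_restrict_mem measurableSet_Ioc] with u hu
  have hu0 : 0 ≤ u := ha.trans hu.1.le
  rw [norm_of_nonneg (by positivity)]
  exact rpow_sub_one_div_sqrt_le hk ⟨hu0, hu.2⟩

lemma flowIntegral_le_arccos (hk : 1 ≤ k) (ha : 0 ≤ a) (ha1 : a ≤ 1) :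
    flowIntegral k a ≤ arccos a := by
  calc flowIntegral k a ≤ ∫ u in a..1, 1 / √(1 - u ^ 2) :=
        integral_mono_on ha1 (intervalIntegrable_rpow_sub_one_div_sqrt_one_sub_sq hk ha ha1)
          (intervalIntegrable_one_div_sqrt_one_sub_sq (by linarith) ha1 le_rfl)
          fun u hu => rpow_sub_one_div_sqrt_le hk ⟨ha.trans hu.1, hu.2⟩
    _ = arccos a := integral_one_div_sqrt_one_sub_sq_eq_arccos (by linarith) ha1

lemma flowIntegral_le_pi_div_two (hk : 1 ≤ k) (ha : 0 ≤ a) (ha1 : a ≤ 1) :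
    flowIntegral k a ≤ π / 2 :=
  (flowIntegral_le_arccos hk ha ha1).trans (arccos_le_pi_div_two.2 ha)

lemma rpow_sub_one_mul_arccos_le_flowIntegral (hk : 1 ≤ k) (ha : 0 ≤ a) (ha1 : a ≤ 1) :
    a ^ (k - 1) * arccos a ≤ flowIntegral k a := by
  calc a ^ (k - 1) * arccos a = ∫ u in a..1, a ^ (k - 1) * (1 / √(1 - u ^ 2)) := by
        rw [intervalIntegral.integral_const_mul,
          integral_one_div_sqrt_one_sub_sq_eq_arccos (by linarith) ha1]
    _ ≤ flowIntegral k a :=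
        integral_mono_on ha1
          ((intervalIntegrable_one_div_sqrt_one_sub_sq (by linarith) ha1 le_rfl).const_mul _)
          (intervalIntegrable_rpow_sub_one_div_sqrt_one_sub_sq hk ha ha1) fun u hu => by
            rw [← mul_div_assoc, mul_one]
            exact div_le_div_of_nonneg_right
              (rpow_le_rpow ha hu.1 (by linarith)) (sqrt_nonneg _)

lemma flowIntegral_nonneg (ha : 0 ≤ a) (ha1 : a ≤ 1) : 0 ≤ flowIntegral k a :=
  integral_nonneg ha1 fun u hu => by have := ha.trans hu.1; positivity

lemma flowIntegral_antitoneOn (hk : 1 ≤ k) : AntitoneOn (flowIntegral k) (Icc 0 1) := by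
  intro a ha b hb hab
  have hint := intervalIntegrable_rpow_sub_one_div_sqrt_one_sub_sq hk ha.1 ha.2
  have hsplit := integral_add_adjacent_intervals
    (hint.mono_set (by rw [uIcc_of_le hab, uIcc_of_le ha.2]; exact Icc_subset_Icc_right hb.2))
    (intervalIntegrable_rpow_sub_one_div_sqrt_one_sub_sq hk hb.1 hb.2)
  rw [flowIntegral, flowIntegral, ← hsplit, le_add_iff_nonneg_left]
  exact integral_nonneg hab fun u hu => by have := ha.1.trans hu.1; positivity

lemma sqrt_one_sub_sq_rpow_le_flowIntegral (hk : 1 ≤ k) (ha : 0 ≤ a) (ha1 : a ≤ 1) :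
    √(1 - a ^ 2) ^ k ≤ 2 ^ k * flowIntegral k a := by
  set b := max a (1 / 2) with hb_def
  have hb : b ∈ Icc 0 1 := ⟨ha.trans (le_max_left _ _), max_le ha1 (by norm_num)⟩
  have hsqrt_le : √(1 - a ^ 2) ^ k ≤ 2 * √(1 - b ^ 2) := by
    have hpow : √(1 - a ^ 2) ^ k ≤ √(1 - a ^ 2) :=
      rpow_le_self_of_le_one (sqrt_nonneg _) (sqrt_le_one.2 (by nlinarith)) hk
    rcases le_total a (1 / 2) with h | h
    · have : (1 : ℝ) / 2 ≤ √(1 - b ^ 2) := by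
        rw [hb_def, max_eq_right h, le_sqrt (by norm_num) (by norm_num)]; norm_num
      linarith [sqrt_le_one.2 (show 1 - a ^ 2 ≤ 1 by nlinarith)]
    · rw [hb_def, max_eq_left h]; linarith [sqrt_nonneg (1 - a ^ 2)]
  have htwo_le : 2 ≤ 2 ^ k * b ^ (k - 1) :=
    calc (2 : ℝ) ≤ 2 * (2 * b) ^ (k - 1) :=
          le_mul_of_one_le_right zero_le_two
            (one_le_rpow (by linarith [le_max_right a (1 / 2)]) (by linarith))
      _ = 2 ^ k * b ^ (k - 1) := by
          rw [mul_rpow zero_le_two hb.1, rpow_sub_one two_ne_zero]; ring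
  calc √(1 - a ^ 2) ^ k ≤ 2 * √(1 - b ^ 2) := hsqrt_le
    _ ≤ 2 ^ k * b ^ (k - 1) * arccos b :=
        mul_le_mul htwo_le (sqrt_one_sub_sq_le_arccos b) (sqrt_nonneg _) (by positivity)
    _ ≤ 2 ^ k * flowIntegral k b := by
        rw [mul_assoc]
        gcongr
        exact rpow_sub_one_mul_arccos_le_flowIntegral hk hb.1 hb.2
    _ ≤ 2 ^ k * flowIntegral k a := by
        gcongr
        exact flowIntegral_antitoneOn hk ⟨ha, ha1⟩ hb (le_max_left _ _)

end FlowIntegral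

lemma sqrt_sq_sub_one_eq {R : ℝ} (hR : 0 < R) : √(R ^ 2 - 1) = R * √(1 - (1 / R) ^ 2) := by
  rw [← sqrt_sq hR.le, ← sqrt_mul (sq_nonneg R), sqrt_sq hR.le]
  congr 1
  field_simp

/-- Analytic core of Lemma 4.2: the `k`-th power of the excursion `2√(R² − 1)` and the flow
integral `2 R^k ∫_{1/R}^{1} u^{k-1}/√(1-u²) du` are comparable up to a constant depending
only on `k`. -/
theorem excursion_flow_integral_comparable (k : ℝ) (hk : 1 ≤ k) :
    ∃ c : ℝ, 0 < c ∧
      (∀ R : ℝ, 1 < R →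
        (2 * Real.sqrt (R ^ 2 - 1)) ^ k ≤
          c * (2 * R ^ k * ∫ u in (1 / R)..1, u ^ (k - 1) / Real.sqrt (1 - u ^ 2))) ∧
      (∀ R : ℝ, 2 ≤ R →
        2 * R ^ k * (∫ u in (1 / R)..1, u ^ (k - 1) / Real.sqrt (1 - u ^ 2)) ≤
          c * (2 * Real.sqrt (R ^ 2 - 1)) ^ k) := by
  have hinv {R : ℝ} (hR : 1 ≤ R) : 0 ≤ 1 / R ∧ 1 / R ≤ 1 :=
    ⟨by positivity, (div_le_one (by linarith)).2 hR⟩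
  refine ⟨max (4 ^ k / 2) π, lt_max_of_lt_right pi_pos, fun R hR => ?_, fun R hR => ?_⟩
  · obtain ⟨ha, ha1⟩ := hinv hR.le
    calc (2 * √(R ^ 2 - 1)) ^ k = 2 ^ k * R ^ k * √(1 - (1 / R) ^ 2) ^ k := by
          have hR0 : 0 < R := by linarith
          rw [sqrt_sq_sub_one_eq hR0, mul_rpow zero_le_two (by positivity),
            mul_rpow hR0.le (sqrt_nonneg _), mul_assoc]
      _ ≤ 2 ^ k * R ^ k * (2 ^ k * flowIntegral k (1 / R)) := by
          gcongr; exact sqrt_one_sub_sq_rpow_le_flowIntegral hk ha ha1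
      _ = 4 ^ k / 2 * (2 * R ^ k * flowIntegral k (1 / R)) := by
          rw [show (4 : ℝ) = 2 * 2 by norm_num, mul_rpow zero_le_two zero_le_two]; ring
      _ ≤ _ := mul_le_mul_of_nonneg_right (le_max_left _ _)
          (by have := flowIntegral_nonneg (k := k) ha ha1; positivity)
  · obtain ⟨ha, ha1⟩ := hinv (by linarith)
    have hR_le : R ≤ 2 * √(R ^ 2 - 1) := by
      have : R / 2 ≤ √(R ^ 2 - 1) := (le_sqrt (by linarith) (by nlinarith)).2 (by nlinarith)
      linarith
    calc 2 * R ^ k * flowIntegral k (1 / R) ≤ 2 * R ^ k * (π / 2) := by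
          gcongr; exact flowIntegral_le_pi_div_two hk ha ha1
      _ = π * R ^ k := by ring
      _ ≤ _ := by
          gcongr
          exact le_max_right _ _
end
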